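/- arXiv:1909.05517 — 6 statements merged into one kernel-verified Lean document; each statement's English description precedes it below -/
import Mathlib

section
/- Let X be a Polish metric space, a>0, and let c : X×X → [0,+∞] be a lower semicontinuous function. For every μ₁, μ₂ ∈ M(X), the infimum of E_c(μ₁,μ₂|γ) over all γ ∈ M equals the infimum of E_c(μ₁,μ₂|γ) over all γ ∈ M≤(μ₁,μ₂), i.e. over those γ ∈ M whose first marginal is ≤ μ₁ and whose second marginal is ≤ μ₂. -/
open MeasureTheory Set Filter Topology
open scoped ENNReal

noncomputable section

variable {X : Type*} [MetricSpace X] [MeasurableSpace X]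

/-- Total variation `|μ - ν|` of the signed difference of two (finite) measures,
computed via the Jordan decomposition `(μ - ν)₊ = μ - ν` and `(μ - ν)₋ = ν - μ`
(`Measure.sub` is the truncated difference of measures). -/
def tvDist (μ ν : Measure X) : ℝ := ((μ - ν) univ + (ν - μ) univ).toReal

/-- Transference plans between `μ` and `ν`: Borel probability measures `π` on `X × X`
with `|μ| π(A × X) = μ A` and `|ν| π(X × B) = ν B`. -/
def plans (μ ν : Measure X) : Set (Measure (X × X)) :=
  {π | IsProbabilityMeasure π ∧
      (∀ A : Set X, MeasurableSet A → μ univ * π (A ×ˢ univ) = μ A) ∧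
      (∀ B : Set X, MeasurableSet B → ν univ * π (univ ×ˢ B) = ν B)}

/-- `W_p(μ, ν)^p = |μ| ⨅_{π ∈ Π(μ,ν)} ∫ d(x,y)^p dπ`. -/
def WpPow (p : ℝ) (μ ν : Measure X) : ℝ≥0∞ :=
  μ univ * ⨅ π ∈ plans μ ν, ∫⁻ z : X × X, edist z.1 z.2 ^ p ∂π

/-- `μ ∈ M_p(X)`: a finite Borel measure with finite `p`-th moment. -/
def MemMp (p : ℝ) (μ : Measure X) : Prop :=
  IsFiniteMeasure μ ∧ ∃ x₀ : X, ∫⁻ x, edist x x₀ ^ p ∂μ < ⊤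

/-- `W̃_p^{a,b}(μ, ν)^p`, the infimum defining the generalized Wasserstein distance. -/
def genWPow (a b p : ℝ) (μ ν : Measure X) : ℝ :=
  sInf {r : ℝ | ∃ μ' ν' : Measure X, MemMp p μ' ∧ MemMp p ν' ∧ μ' univ = ν' univ ∧
      r = a * tvDist μ μ' + a * tvDist ν ν' + b ^ p * (WpPow p μ' ν').toReal}

/-- The generalized Wasserstein distance `W̃_p^{a,b}(μ, ν)`. -/
def genW (a b p : ℝ) (μ ν : Measure X) : ℝ := genWPow a b p μ ν ^ (1 / p)

/-- `E_c(μ₁, μ₂ | γ) = a|μ₁ - γ₁| + a|μ₂ - γ₂| + ∫ c dγ`, where `γ₁, γ₂` are the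
marginals of `γ`. -/
def EcostPlan (a : ℝ) (c : X × X → ℝ≥0∞) (μ ν : Measure X) (γ : Measure (X × X)) : ℝ :=
  a * tvDist μ (γ.map Prod.fst) + a * tvDist ν (γ.map Prod.snd) + (∫⁻ z, c z ∂γ).toReal

/-- `E_c(μ₁, μ₂) = inf { E_c(μ₁, μ₂ | γ) : γ ∈ M(X × X), ∫ c dγ < ∞ }`. -/
def Ecost (a : ℝ) (c : X × X → ℝ≥0∞) (μ ν : Measure X) : ℝ :=
  sInf {r : ℝ | ∃ γ : Measure (X × X), IsFiniteMeasure γ ∧ (∫⁻ z, c z ∂γ) < ⊤ ∧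
      r = EcostPlan a c μ ν γ}

section Aux
variable {Y : Type*} [MeasurableSpace Y]


/-- Truncated measure subtraction via densities w.r.t. a common dominating measure. -/
lemma my_sub_eq_withDensity (ρ μ ν : Measure Y) [SigmaFinite ρ] [IsFiniteMeasure μ]
    [IsFiniteMeasure ν] (hμ : μ ≪ ρ) (hν : ν ≪ ρ) :
    μ - ν = ρ.withDensity (fun x => μ.rnDeriv ρ x - ν.rnDeriv ρ x) := by
  set f := μ.rnDeriv ρ with hf
  set g := ν.rnDeriv ρ with hg
  have hfm : Measurable f := Measure.measurable_rnDeriv _ _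
  have hgm : Measurable g := Measure.measurable_rnDeriv _ _
  have hμe : ρ.withDensity f = μ := Measure.withDensity_rnDeriv_eq _ _ hμ
  have hνe : ρ.withDensity g = ν := Measure.withDensity_rnDeriv_eq _ _ hν
  apply le_antisymm
  · apply Measure.sub_le_of_le_add
    rw [← hμe, ← hνe, ← withDensity_add_left (show Measurable (fun x => f x - g x) from hfm.sub hgm)]
    exact withDensity_mono (Filter.Eventually.of_forall fun x => le_tsub_add)
  · rw [Measure.sub_def]
    refine le_sInf fun d hd => ?_
    rw [Measure.le_iff]
    intro s hs
    rw [withDensity_apply _ hs]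
    set E : Set Y := {x | g x < f x} with hE
    have hEm : MeasurableSet E := measurableSet_lt hgm hfm
    have hz : ∫⁻ x in s \ E, (f x - g x) ∂ρ = 0 := by
      have : ∀ x ∈ s \ E, f x - g x = (0 : ℝ≥0∞) := fun x hx =>
        tsub_eq_zero_of_le (not_lt.1 hx.2)
      rw [setLIntegral_congr_fun (hs.diff hEm) this,
        lintegral_zero]
    have hsplit : ∫⁻ x in s, (f x - g x) ∂ρ = ∫⁻ x in s ∩ E, (f x - g x) ∂ρ := by
      conv_lhs => rw [← inter_union_diff s E]
      rw [lintegral_union (hs.diff hEm) disjoint_sdiff_inter.symm, hz, add_zero]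
    rw [hsplit]
    have hgle : ∀ x ∈ s ∩ E, g x ≤ f x := fun x hx => (hx.2 : g x < f x).le
    have hgfin : ∫⁻ x in s ∩ E, g x ∂ρ ≠ ⊤ := by
      have : ∫⁻ x in s ∩ E, g x ∂ρ = ν (s ∩ E) := by
        rw [← hνe, withDensity_apply _ (hs.inter hEm)]
      rw [this]; exact (measure_lt_top ν _).ne
    rw [lintegral_sub hgm hgfin (ae_restrict_of_forall_mem (hs.inter hEm) hgle)]
    · have h1 : ∫⁻ x in s ∩ E, f x ∂ρ = μ (s ∩ E) := by
        rw [← hμe, withDensity_apply _ (hs.inter hEm)]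
      have h2 : ∫⁻ x in s ∩ E, g x ∂ρ = ν (s ∩ E) := by
        rw [← hνe, withDensity_apply _ (hs.inter hEm)]
      rw [h1, h2]
      have := hd (s ∩ E)
      calc μ (s ∩ E) - ν (s ∩ E) ≤ d (s ∩ E) := tsub_le_iff_right.2 (hd (s ∩ E))
        _ ≤ d s := measure_mono inter_subset_left

lemma my_le_sub_add (μ ν : Measure Y) [IsFiniteMeasure μ] [IsFiniteMeasure ν] :
    μ ≤ μ - ν + ν := by
  have hμρ : μ ≪ μ + ν := Measure.absolutelyContinuous_of_le (Measure.le_add_right le_rfl)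
  have hνρ : ν ≪ μ + ν := Measure.absolutelyContinuous_of_le (Measure.le_add_left le_rfl)
  calc μ = (μ + ν).withDensity (μ.rnDeriv (μ + ν)) :=
        (Measure.withDensity_rnDeriv_eq μ (μ + ν) hμρ).symm
    _ ≤ (μ + ν).withDensity (fun x => (μ.rnDeriv (μ + ν) x - ν.rnDeriv (μ + ν) x)
          + ν.rnDeriv (μ + ν) x) :=
        withDensity_mono (Filter.Eventually.of_forall fun x => le_tsub_add)
    _ = (μ + ν).withDensity (fun x => μ.rnDeriv (μ + ν) x - ν.rnDeriv (μ + ν) x)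
          + (μ + ν).withDensity (ν.rnDeriv (μ + ν)) :=
        withDensity_add_left ((Measure.measurable_rnDeriv _ _).sub
          (Measure.measurable_rnDeriv _ _)) _
    _ = μ - ν + ν := by
        rw [← my_sub_eq_withDensity (μ + ν) μ ν hμρ hνρ,
          Measure.withDensity_rnDeriv_eq ν (μ + ν) hνρ]

lemma my_sub_mono_left {μ₁ μ₂ ν : Measure Y} [IsFiniteMeasure μ₂] [IsFiniteMeasure ν]
    (h : μ₁ ≤ μ₂) : μ₁ - ν ≤ μ₂ - ν :=
  Measure.sub_le_of_le_add (h.trans (my_le_sub_add μ₂ ν))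

lemma my_key (μ κ : Measure Y) [IsFiniteMeasure μ] [IsFiniteMeasure κ] :
    ∃ f₁ : Y → ℝ≥0∞, Measurable f₁ ∧ f₁ ≤ 1 ∧
      κ.withDensity f₁ ≤ μ ∧ κ.withDensity f₁ ≤ κ ∧
      μ - κ.withDensity f₁ = μ - κ ∧ κ - κ.withDensity f₁ = κ - μ := by
  set ρ := μ + κ with hρ
  have hμρ : μ ≪ ρ := Measure.absolutelyContinuous_of_le (Measure.le_add_right le_rfl)
  have hκρ : κ ≪ ρ := Measure.absolutelyContinuous_of_le (Measure.le_add_left le_rfl)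
  set f := μ.rnDeriv ρ with hf
  set g := κ.rnDeriv ρ with hg
  have hfm : Measurable f := Measure.measurable_rnDeriv _ _
  have hgm : Measurable g := Measure.measurable_rnDeriv _ _
  have hμe : ρ.withDensity f = μ := Measure.withDensity_rnDeriv_eq _ _ hμρ
  have hκe : ρ.withDensity g = κ := Measure.withDensity_rnDeriv_eq _ _ hκρ
  set f₁ : Y → ℝ≥0∞ := fun x => min 1 (f x / g x) with hf₁
  have hf₁m : Measurable f₁ := (measurable_const.min (hfm.div hgm))
  have hf₁le : f₁ ≤ 1 := fun x => min_le_left _ _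
  have hν : κ.withDensity f₁ = ρ.withDensity (fun x => min (g x) (f x)) := by
    conv_lhs => rw [← hκe]
    rw [← withDensity_mul ρ hgm hf₁m]
    refine withDensity_congr_ae ?_
    filter_upwards [Measure.rnDeriv_lt_top κ ρ] with x hx
    show g x * min 1 (f x / g x) = min (g x) (f x)
    by_cases h0 : g x = 0
    · simp [h0]
    rcases le_total (f x) (g x) with hle | hle
    · have hd1 : f x / g x ≤ 1 := by
        rw [ENNReal.div_le_iff h0 hx.ne]; simpa using hle
      rw [min_eq_right hd1, ENNReal.mul_div_cancel h0 hx.ne, min_eq_right hle]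
    · have hd1 : (1 : ℝ≥0∞) ≤ f x / g x := by
        rw [ENNReal.le_div_iff_mul_le (Or.inl h0) (Or.inl hx.ne)]; simpa using hle
      rw [min_eq_left hd1, mul_one, min_eq_left hle]
  have hνρ : κ.withDensity f₁ ≪ ρ := (withDensity_absolutelyContinuous κ f₁).trans hκρ
  haveI : IsFiniteMeasure (κ.withDensity f₁) := by
    refine isFiniteMeasure_of_le κ ?_
    calc κ.withDensity f₁ ≤ κ.withDensity 1 :=
          withDensity_mono (Filter.Eventually.of_forall hf₁le)
      _ = κ := withDensity_one
  have hrn : (κ.withDensity f₁).rnDeriv ρ =ᵐ[ρ] fun x => min (g x) (f x) := by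
    rw [hν]; exact Measure.rnDeriv_withDensity ρ (hgm.min hfm)
  have hνμ : κ.withDensity f₁ ≤ μ := by
    rw [hν]
    calc ρ.withDensity (fun x => min (g x) (f x)) ≤ ρ.withDensity f :=
          withDensity_mono (Filter.Eventually.of_forall fun x => min_le_right _ _)
      _ = μ := hμe
  have hνκ : κ.withDensity f₁ ≤ κ := by
    rw [hν]
    calc ρ.withDensity (fun x => min (g x) (f x)) ≤ ρ.withDensity g :=
          withDensity_mono (Filter.Eventually.of_forall fun x => min_le_left _ _)
      _ = κ := hκe
  refine ⟨f₁, hf₁m, hf₁le, hνμ, hνκ, ?_, ?_⟩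
  · rw [my_sub_eq_withDensity ρ μ (κ.withDensity f₁) hμρ hνρ,
      my_sub_eq_withDensity ρ μ κ hμρ hκρ]
    refine withDensity_congr_ae ?_
    filter_upwards [hrn] with x hx
    rw [hx]
    rcases le_total (f x) (g x) with hle | hle
    · rw [min_eq_right hle, tsub_eq_zero_of_le le_rfl, tsub_eq_zero_of_le hle]
    · rw [min_eq_left hle]
  · rw [my_sub_eq_withDensity ρ κ (κ.withDensity f₁) hκρ hνρ,
      my_sub_eq_withDensity ρ κ μ hκρ hμρ]
    refine withDensity_congr_ae ?_
    filter_upwards [hrn] with x hx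
    rw [hx]
    rcases le_total (f x) (g x) with hle | hle
    · rw [min_eq_right hle]
    · rw [min_eq_left hle, tsub_eq_zero_of_le le_rfl, tsub_eq_zero_of_le hle]

lemma my_map_fst_withDensity (γ : Measure (Y × Y)) (f : Y → ℝ≥0∞) (hf : Measurable f) :
    (γ.withDensity (fun z => f z.1)).map Prod.fst = (γ.map Prod.fst).withDensity f := by
  ext s hs
  rw [Measure.map_apply measurable_fst hs, withDensity_apply _ (measurable_fst hs),
    withDensity_apply _ hs, setLIntegral_map hs hf measurable_fst]

/-- Total variation as an `ℝ≥0∞` quantity. -/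
noncomputable def Tv (μ ν : Measure Y) : ℝ≥0∞ := (μ - ν) univ + (ν - μ) univ

lemma Tv_lt_top (μ ν : Measure Y) [IsFiniteMeasure μ] [IsFiniteMeasure ν] :
    Tv μ ν < ⊤ := by
  have h1 : (μ - ν) univ ≤ μ univ := Measure.sub_le univ
  have h2 : (ν - μ) univ ≤ ν univ := Measure.sub_le univ
  exact lt_of_le_of_lt (add_le_add h1 h2) (by
    exact ENNReal.add_lt_top.2 ⟨measure_lt_top _ _, measure_lt_top _ _⟩)

lemma my_step (μ ν : Measure Y) [IsFiniteMeasure μ] [IsFiniteMeasure ν]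
    (γ : Measure (Y × Y)) [IsFiniteMeasure γ] :
    ∃ γ' : Measure (Y × Y), γ' ≤ γ ∧ γ'.map Prod.fst ≤ μ ∧
      Tv μ (γ'.map Prod.fst) + Tv ν (γ'.map Prod.snd) ≤
        Tv μ (γ.map Prod.fst) + Tv ν (γ.map Prod.snd) := by
  set κ := γ.map Prod.fst with hκ
  haveI : IsFiniteMeasure κ := Measure.isFiniteMeasure_map γ Prod.fst
  obtain ⟨f₁, hf₁m, hf₁le, hνμ, hνκ, hsub1, hsub2⟩ := my_key μ κ
  set γ' := γ.withDensity (fun z => f₁ z.1) with hγ'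
  have hmap : γ'.map Prod.fst = κ.withDensity f₁ := my_map_fst_withDensity γ f₁ hf₁m
  have hγ'γ : γ' ≤ γ := by
    calc γ' ≤ γ.withDensity 1 :=
          withDensity_mono (Filter.Eventually.of_forall fun z => hf₁le z.1)
      _ = γ := withDensity_one
  haveI : IsFiniteMeasure γ' := isFiniteMeasure_of_le γ hγ'γ
  haveI : IsFiniteMeasure (κ.withDensity f₁) := isFiniteMeasure_of_le μ hνμ
  refine ⟨γ', hγ'γ, hmap ▸ hνμ, ?_⟩
  set σ := γ.map Prod.snd with hσ
  set σ' := γ'.map Prod.snd with hσ'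
  haveI : IsFiniteMeasure σ := Measure.isFiniteMeasure_map γ Prod.snd
  haveI : IsFiniteMeasure σ' := Measure.isFiniteMeasure_map γ' Prod.snd
  have hσ'σ : σ' ≤ σ := Measure.map_mono hγ'γ measurable_snd
  -- first coordinate Tv
  have T1 : Tv μ (γ'.map Prod.fst) = (μ - κ) univ := by
    rw [Tv, hmap, hsub1, Measure.sub_eq_zero_of_le hνμ]
    simp
  -- mass identity
  have hmassσ : (σ - σ') univ = (κ - μ) univ := by
    rw [Measure.sub_apply MeasurableSet.univ hσ'σ, ← hsub2,
      Measure.sub_apply MeasurableSet.univ hνκ]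
    have h1 : σ univ = κ univ := by
      rw [hσ, hκ, Measure.map_apply measurable_snd MeasurableSet.univ,
        Measure.map_apply measurable_fst MeasurableSet.univ, preimage_univ, preimage_univ]
    have h2 : σ' univ = (κ.withDensity f₁) univ := by
      rw [hσ', ← hmap, Measure.map_apply measurable_snd MeasurableSet.univ,
        Measure.map_apply measurable_fst MeasurableSet.univ, preimage_univ, preimage_univ]
    rw [h1, h2]
  -- second coordinate triangle
  have A : (ν - σ') ≤ (ν - σ) + (σ - σ') := by
    apply Measure.sub_le_of_le_add
    calc ν ≤ ν - σ + σ := my_le_sub_add ν σ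
      _ = ν - σ + ((σ - σ') + σ') := by rw [Measure.sub_add_cancel_of_le hσ'σ]
      _ = (ν - σ) + (σ - σ') + σ' := by rw [add_assoc]
  have B : (σ' - ν) ≤ (σ - ν) := my_sub_mono_left hσ'σ
  have T2 : Tv ν σ' ≤ Tv ν σ + (κ - μ) univ := by
    rw [Tv, Tv]
    calc (ν - σ') univ + (σ' - ν) univ
        ≤ ((ν - σ) + (σ - σ')) univ + (σ - ν) univ := add_le_add (A univ) (B univ)
      _ = (ν - σ) univ + (σ - σ') univ + (σ - ν) univ := by rw [Measure.add_apply]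
      _ = (ν - σ) univ + (σ - ν) univ + (κ - μ) univ := by rw [hmassσ]; ring
  calc Tv μ (γ'.map Prod.fst) + Tv ν σ'
      ≤ (μ - κ) univ + (Tv ν σ + (κ - μ) univ) := by rw [T1]; exact add_le_add le_rfl T2
    _ = ((μ - κ) univ + (κ - μ) univ) + Tv ν σ := by ring
    _ = Tv μ κ + Tv ν σ := rfl

lemma my_step_snd (μ ν : Measure Y) [IsFiniteMeasure μ] [IsFiniteMeasure ν]
    (γ : Measure (Y × Y)) [IsFiniteMeasure γ] :
    ∃ γ' : Measure (Y × Y), γ' ≤ γ ∧ γ'.map Prod.snd ≤ ν ∧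
      Tv μ (γ'.map Prod.fst) + Tv ν (γ'.map Prod.snd) ≤
        Tv μ (γ.map Prod.fst) + Tv ν (γ.map Prod.snd) := by
  set τ := γ.map Prod.swap with hτ
  haveI : IsFiniteMeasure τ := Measure.isFiniteMeasure_map γ Prod.swap
  have hswapswap : ∀ m : Measure (Y × Y), (m.map Prod.swap).map Prod.swap = m := by
    intro m
    rw [Measure.map_map measurable_swap measurable_swap]
    simp [Function.comp_def, Measure.map_id]
  have hfstswap : ∀ m : Measure (Y × Y), (m.map Prod.swap).map Prod.fst = m.map Prod.snd := by
    intro m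
    rw [Measure.map_map measurable_fst measurable_swap]; rfl
  have hsndswap : ∀ m : Measure (Y × Y), (m.map Prod.swap).map Prod.snd = m.map Prod.fst := by
    intro m
    rw [Measure.map_map measurable_snd measurable_swap]; rfl
  obtain ⟨δ, hδτ, hδfst, hδT⟩ := my_step ν μ τ
  refine ⟨δ.map Prod.swap, ?_, ?_, ?_⟩
  · calc δ.map Prod.swap ≤ τ.map Prod.swap := Measure.map_mono hδτ measurable_swap
      _ = γ := hswapswap γ
  · rw [hsndswap δ]; exact hδfst
  · rw [hfstswap δ, hsndswap δ, add_comm (Tv μ _), add_comm (Tv μ _)]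
    calc Tv ν (δ.map Prod.fst) + Tv μ (δ.map Prod.snd)
        ≤ Tv ν (τ.map Prod.fst) + Tv μ (τ.map Prod.snd) := hδT
      _ = Tv ν (γ.map Prod.snd) + Tv μ (γ.map Prod.fst) := by
          rw [hfstswap γ, hsndswap γ]

lemma my_reduce (μ ν : Measure Y) [IsFiniteMeasure μ] [IsFiniteMeasure ν]
    (γ : Measure (Y × Y)) [IsFiniteMeasure γ] :
    ∃ γ'' : Measure (Y × Y), γ'' ≤ γ ∧ γ''.map Prod.fst ≤ μ ∧ γ''.map Prod.snd ≤ ν ∧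
      Tv μ (γ''.map Prod.fst) + Tv ν (γ''.map Prod.snd) ≤
        Tv μ (γ.map Prod.fst) + Tv ν (γ.map Prod.snd) := by
  obtain ⟨γ', hγ'γ, hfst, hT1⟩ := my_step μ ν γ
  haveI : IsFiniteMeasure γ' := isFiniteMeasure_of_le γ hγ'γ
  obtain ⟨γ'', hγ''γ', hsnd, hT2⟩ := my_step_snd μ ν γ'
  refine ⟨γ'', hγ''γ'.trans hγ'γ, ?_, hsnd, hT2.trans hT1⟩
  calc γ''.map Prod.fst ≤ γ'.map Prod.fst := Measure.map_mono hγ''γ' measurable_fst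
    _ ≤ μ := hfst


lemma EcostPlan_nonneg {X : Type*} [MetricSpace X] [MeasurableSpace X] {a : ℝ} (ha : 0 ≤ a)
    (c : X × X → ℝ≥0∞) (μ ν : Measure X) (γ : Measure (X × X)) :
    0 ≤ EcostPlan a c μ ν γ := by
  unfold EcostPlan tvDist
  exact add_nonneg (add_nonneg (mul_nonneg ha ENNReal.toReal_nonneg)
    (mul_nonneg ha ENNReal.toReal_nonneg)) ENNReal.toReal_nonneg

end Aux

/-- the infimum of `E_c(μ₁, μ₂ | ·)` over all plans in `M` agrees
with the infimum over plans whose marginals are dominated by `μ₁` and `μ₂`. -/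
theorem Ecost_inf_eq_inf_le_marginals
    {X : Type*} [MetricSpace X] [PolishSpace X] [MeasurableSpace X] [BorelSpace X]
    (a : ℝ) (ha : 0 < a) (c : X × X → ℝ≥0∞) (hc : LowerSemicontinuous c)
    (μ₁ μ₂ : Measure X) [IsFiniteMeasure μ₁] [IsFiniteMeasure μ₂] :
    sInf {r : ℝ | ∃ γ : Measure (X × X), IsFiniteMeasure γ ∧ (∫⁻ z, c z ∂γ) < ⊤ ∧
        r = EcostPlan a c μ₁ μ₂ γ} =
      sInf {r : ℝ | ∃ γ : Measure (X × X), IsFiniteMeasure γ ∧ (∫⁻ z, c z ∂γ) < ⊤ ∧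
        γ.map Prod.fst ≤ μ₁ ∧ γ.map Prod.snd ≤ μ₂ ∧
        r = EcostPlan a c μ₁ μ₂ γ} := by
  have hnonneg : ∀ γ : Measure (X × X), 0 ≤ EcostPlan a c μ₁ μ₂ γ :=
    fun γ => EcostPlan_nonneg ha.le c μ₁ μ₂ γ
  have hmem2 : EcostPlan a c μ₁ μ₂ 0 ∈ {r : ℝ | ∃ γ : Measure (X × X), IsFiniteMeasure γ ∧
      (∫⁻ z, c z ∂γ) < ⊤ ∧ γ.map Prod.fst ≤ μ₁ ∧ γ.map Prod.snd ≤ μ₂ ∧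
      r = EcostPlan a c μ₁ μ₂ γ} := by
    refine ⟨0, inferInstance, by simp, ?_, ?_, rfl⟩
    · rw [Measure.map_zero]; exact Measure.zero_le μ₁
    · rw [Measure.map_zero]; exact Measure.zero_le μ₂
  have hmem1 : EcostPlan a c μ₁ μ₂ 0 ∈ {r : ℝ | ∃ γ : Measure (X × X), IsFiniteMeasure γ ∧
      (∫⁻ z, c z ∂γ) < ⊤ ∧ r = EcostPlan a c μ₁ μ₂ γ} :=
    ⟨0, inferInstance, by simp, rfl⟩
  have hbdd1 : BddBelow {r : ℝ | ∃ γ : Measure (X × X), IsFiniteMeasure γ ∧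
      (∫⁻ z, c z ∂γ) < ⊤ ∧ r = EcostPlan a c μ₁ μ₂ γ} := by
    refine ⟨0, ?_⟩
    rintro r ⟨γ, _, _, rfl⟩
    exact hnonneg γ
  have hbdd2 : BddBelow {r : ℝ | ∃ γ : Measure (X × X), IsFiniteMeasure γ ∧
      (∫⁻ z, c z ∂γ) < ⊤ ∧ γ.map Prod.fst ≤ μ₁ ∧ γ.map Prod.snd ≤ μ₂ ∧
      r = EcostPlan a c μ₁ μ₂ γ} := by
    refine ⟨0, ?_⟩
    rintro r ⟨γ, _, _, _, _, rfl⟩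
    exact hnonneg γ
  have hkey : ∀ γ : Measure (X × X), IsFiniteMeasure γ → (∫⁻ z, c z ∂γ) < ⊤ →
      ∃ γ'' : Measure (X × X), IsFiniteMeasure γ'' ∧ (∫⁻ z, c z ∂γ'') < ⊤ ∧
        γ''.map Prod.fst ≤ μ₁ ∧ γ''.map Prod.snd ≤ μ₂ ∧
        EcostPlan a c μ₁ μ₂ γ'' ≤ EcostPlan a c μ₁ μ₂ γ := by
    intro γ hγ hcost
    haveI := hγ
    obtain ⟨γ'', hle, h1, h2, hT⟩ := my_reduce μ₁ μ₂ γ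
    haveI : IsFiniteMeasure γ'' := isFiniteMeasure_of_le γ hle
    haveI : IsFiniteMeasure (γ.map Prod.fst) := Measure.isFiniteMeasure_map γ Prod.fst
    haveI : IsFiniteMeasure (γ.map Prod.snd) := Measure.isFiniteMeasure_map γ Prod.snd
    haveI : IsFiniteMeasure (γ''.map Prod.fst) := Measure.isFiniteMeasure_map γ'' Prod.fst
    haveI : IsFiniteMeasure (γ''.map Prod.snd) := Measure.isFiniteMeasure_map γ'' Prod.snd
    have hcost'' : ∫⁻ z, c z ∂γ'' ≤ ∫⁻ z, c z ∂γ := lintegral_mono' hle le_rfl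
    refine ⟨γ'', inferInstance, lt_of_le_of_lt hcost'' hcost, h1, h2, ?_⟩
    have hfin : Tv μ₁ (γ.map Prod.fst) + Tv μ₂ (γ.map Prod.snd) ≠ ⊤ :=
      (ENNReal.add_lt_top.2 ⟨Tv_lt_top _ _, Tv_lt_top _ _⟩).ne
    have e1 : a * tvDist μ₁ (γ''.map Prod.fst) + a * tvDist μ₂ (γ''.map Prod.snd)
        = a * (Tv μ₁ (γ''.map Prod.fst) + Tv μ₂ (γ''.map Prod.snd)).toReal := by
      rw [ENNReal.toReal_add (Tv_lt_top _ _).ne (Tv_lt_top _ _).ne, mul_add]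
      rfl
    have e2 : a * tvDist μ₁ (γ.map Prod.fst) + a * tvDist μ₂ (γ.map Prod.snd)
        = a * (Tv μ₁ (γ.map Prod.fst) + Tv μ₂ (γ.map Prod.snd)).toReal := by
      rw [ENNReal.toReal_add (Tv_lt_top _ _).ne (Tv_lt_top _ _).ne, mul_add]
      rfl
    show a * tvDist μ₁ (γ''.map Prod.fst) + a * tvDist μ₂ (γ''.map Prod.snd)
        + (∫⁻ z, c z ∂γ'').toReal ≤ a * tvDist μ₁ (γ.map Prod.fst)
        + a * tvDist μ₂ (γ.map Prod.snd) + (∫⁻ z, c z ∂γ).toReal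
    refine add_le_add ?_ (ENNReal.toReal_mono hcost.ne hcost'')
    rw [e1, e2]
    exact mul_le_mul_of_nonneg_left (ENNReal.toReal_mono hfin hT) ha.le
  apply le_antisymm
  · refine csInf_le_csInf hbdd1 ⟨_, hmem2⟩ ?_
    rintro r ⟨γ, hf, hc, _, _, hr⟩
    exact ⟨γ, hf, hc, hr⟩
  · refine le_csInf ⟨_, hmem1⟩ ?_
    rintro r ⟨γ, hγfin, hγcost, rfl⟩
    obtain ⟨γ'', hf'', hc'', h1, h2, hE⟩ := hkey γ hγfin hγcost
    exact le_trans (csInf_le hbdd2 ⟨γ'', hf'', hc'', h1, h2, rfl⟩) hE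
end
end

section
/- Let X be a Polish metric space, a>0, and let c : X×X → [0,+∞] be a lower semicontinuous function with c(x,x) = 0 for every x ∈ X. Then for every μ₁, μ₂ ∈ M(X), E_c(μ₁,μ₂) ≥ sup over pairs (φ₁,φ₂) ∈ Φ_c of Σᵢ ∫_X I(φᵢ(x)) dμᵢ(x), where Φ_c is the set of pairs (φ₁,φ₂) of bounded continuous real functions on X satisfying φ₁(x) + φ₂(y) ≤ c(x,y) and φ₁(x), φ₂(y) ≥ −a for all x,y ∈ X. -/
open MeasureTheory Set Filter Topology
open scoped ENNReal

noncomputable section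

variable {X : Type*} [MetricSpace X] [MeasurableSpace X]

/-- `I(φ) = inf_{s ≥ 0} (sφ + a|1 - s|)`. -/
def IFun (a t : ℝ) : ℝ := ⨅ s : {s : ℝ // 0 ≤ s}, ((s : ℝ) * t + a * |1 - (s : ℝ)|)

lemma tvDist_nonneg (μ ν : Measure X) : 0 ≤ tvDist μ ν := ENNReal.toReal_nonneg

lemma IFun_eq_min {a t : ℝ} (ha : 0 < a) (ht : -a ≤ t) : IFun a t = min t a := by
  have key : ∀ s : {s : ℝ // 0 ≤ s}, min t a ≤ (s : ℝ) * t + a * |1 - (s : ℝ)| := by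
    rintro ⟨s, hs⟩
    rcases le_total s 1 with h | h
    · rw [abs_of_nonneg (by linarith)]
      have h1 : min t a ≤ t := min_le_left _ _
      have h2 : min t a ≤ a := min_le_right _ _
      nlinarith
    · rw [abs_of_nonpos (by linarith)]
      have h1 : min t a ≤ t := min_le_left _ _
      nlinarith
  have hbdd : BddBelow (Set.range fun s : {s : ℝ // 0 ≤ s} =>
      (s : ℝ) * t + a * |1 - (s : ℝ)|) := ⟨min t a, by rintro _ ⟨s, rfl⟩; exact key s⟩
  refine le_antisymm (le_min ?_ ?_) (le_ciInf key)
  · simpa [IFun] using ciInf_le hbdd (⟨1, by norm_num⟩ : {s : ℝ // 0 ≤ s})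
  · simpa [IFun] using ciInf_le hbdd (⟨0, le_rfl⟩ : {s : ℝ // 0 ≤ s})

lemma integral_le_integral_add_tv (μ ν : Measure X) [IsFiniteMeasure μ] [IsFiniteMeasure ν]
    {f : X → ℝ} (hfμ : Integrable f μ) (hfν : Integrable f ν)
    {a : ℝ} (ha : 0 ≤ a) (hb : ∀ x, |f x| ≤ a) :
    ∫ x, f x ∂μ ≤ ∫ x, f x ∂ν + a * tvDist μ ν := by
  obtain ⟨s, hs, hle, hge⟩ := hahn_decomposition (μ := μ) (ν := ν)
  have h1 : ν.restrict s ≤ μ.restrict s := by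
    rw [Measure.le_iff]
    intro t ht
    rw [Measure.restrict_apply ht, Measure.restrict_apply ht]
    exact hle _ (ht.inter hs) inter_subset_right
  have h2 : μ.restrict sᶜ ≤ ν.restrict sᶜ := by
    rw [Measure.le_iff]
    intro t ht
    rw [Measure.restrict_apply ht, Measure.restrict_apply ht]
    exact hge _ (ht.inter hs.compl) inter_subset_right
  set κ := μ.restrict s - ν.restrict s with hκ
  set κ' := ν.restrict sᶜ - μ.restrict sᶜ with hκ'
  have hκ_eq : κ + ν.restrict s = μ.restrict s := Measure.sub_add_cancel_of_le h1
  have hκ'_eq : κ' + μ.restrict sᶜ = ν.restrict sᶜ := Measure.sub_add_cancel_of_le h2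
  have hκ_le : κ ≤ μ := le_trans Measure.sub_le Measure.restrict_le_self
  have hκ'_le : κ' ≤ ν := le_trans Measure.sub_le Measure.restrict_le_self
  haveI : IsFiniteMeasure κ := isFiniteMeasure_of_le μ hκ_le
  haveI : IsFiniteMeasure κ' := isFiniteMeasure_of_le ν hκ'_le
  have hfκ : Integrable f κ := hfμ.mono_measure hκ_le
  have hfκ' : Integrable f κ' := hfν.mono_measure hκ'_le
  have e1 : ∫ x, f x ∂(μ.restrict s) = ∫ x, f x ∂κ + ∫ x, f x ∂(ν.restrict s) := by
    rw [← hκ_eq, integral_add_measure hfκ (hfν.mono_measure Measure.restrict_le_self)]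
  have e2 : ∫ x, f x ∂(ν.restrict sᶜ) = ∫ x, f x ∂κ' + ∫ x, f x ∂(μ.restrict sᶜ) := by
    rw [← hκ'_eq, integral_add_measure hfκ' (hfμ.mono_measure Measure.restrict_le_self)]
  have hbκ : ∫ x, f x ∂κ ≤ a * (κ univ).toReal := by
    refine le_trans (le_abs_self _) ?_
    simpa [Real.norm_eq_abs, Measure.real] using
      norm_integral_le_of_norm_le_const (μ := κ) (f := f) (C := a)
        (ae_of_all _ fun x => by simpa [Real.norm_eq_abs] using hb x)
  have hbκ' : -(a * (κ' univ).toReal) ≤ ∫ x, f x ∂κ' := by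
    have := norm_integral_le_of_norm_le_const (μ := κ') (f := f) (C := a)
        (ae_of_all _ fun x => by simpa [Real.norm_eq_abs] using hb x)
    rw [Real.norm_eq_abs, abs_le] at this
    exact this.1
  have hκu : (κ univ).toReal ≤ ((μ - ν) univ).toReal := by
    refine ENNReal.toReal_mono (measure_ne_top _ _) ?_
    rw [hκ, ← Measure.restrict_sub_eq_restrict_sub_restrict hs]
    calc (μ - ν).restrict s univ = (μ - ν) s := by
          rw [Measure.restrict_apply_univ]
      _ ≤ (μ - ν) univ := measure_mono (subset_univ s)
  have hκ'u : (κ' univ).toReal ≤ ((ν - μ) univ).toReal := by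
    refine ENNReal.toReal_mono (measure_ne_top _ _) ?_
    rw [hκ', ← Measure.restrict_sub_eq_restrict_sub_restrict hs.compl]
    calc (ν - μ).restrict sᶜ univ = (ν - μ) sᶜ := by
          rw [Measure.restrict_apply_univ]
      _ ≤ (ν - μ) univ := measure_mono (subset_univ _)
  have htv : tvDist μ ν = ((μ - ν) univ).toReal + ((ν - μ) univ).toReal := by
    rw [tvDist, ENNReal.toReal_add (measure_ne_top _ _) (measure_ne_top _ _)]
  have hμdecomp : ∫ x, f x ∂μ = ∫ x in s, f x ∂μ + ∫ x in sᶜ, f x ∂μ :=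
    (integral_add_compl hs hfμ).symm
  have hνdecomp : ∫ x in s, f x ∂ν + ∫ x in sᶜ, f x ∂ν = ∫ x, f x ∂ν :=
    integral_add_compl hs hfν
  have hmul : a * (κ univ).toReal + a * (κ' univ).toReal ≤ a * tvDist μ ν := by
    rw [htv]
    nlinarith
  have e2' : ∫ x in sᶜ, f x ∂μ = ∫ x in sᶜ, f x ∂ν - ∫ x, f x ∂κ' := by
    rw [e2]; ring
  rw [hμdecomp, e2']
  have e1' : ∫ x in s, f x ∂μ = ∫ x, f x ∂κ + ∫ x in s, f x ∂ν := e1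
  rw [e1']
  linarith

lemma integrable_of_cont_bdd {α : Type*} [MeasurableSpace α] [TopologicalSpace α]
    [OpensMeasurableSpace α] (μ : Measure α) [IsFiniteMeasure μ] {f : α → ℝ}
    (hf : Continuous f) {C : ℝ} (hC : ∀ x, |f x| ≤ C) : Integrable f μ :=
  ⟨hf.measurable.aestronglyMeasurable,
    HasFiniteIntegral.of_bounded (ae_of_all _ fun x => by
      simpa [Real.norm_eq_abs] using hC x)⟩


/-- the easy inequality in the duality formula for `E_c`. -/
theorem Ecost_ge_dual
    {X : Type*} [MetricSpace X] [PolishSpace X] [MeasurableSpace X] [BorelSpace X]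
    (a : ℝ) (ha : 0 < a) (c : X × X → ℝ≥0∞)
    (hc : LowerSemicontinuous c) (hcd : ∀ x : X, c (x, x) = 0)
    (μ₁ μ₂ : Measure X) [IsFiniteMeasure μ₁] [IsFiniteMeasure μ₂] :
    sSup {r : ℝ | ∃ φ₁ φ₂ : BoundedContinuousFunction X ℝ,
        (∀ x y : X, ENNReal.ofReal (φ₁ x + φ₂ y) ≤ c (x, y)) ∧
        (∀ x : X, -a ≤ φ₁ x) ∧ (∀ y : X, -a ≤ φ₂ y) ∧
        r = ∫ x, IFun a (φ₁ x) ∂μ₁ + ∫ x, IFun a (φ₂ x) ∂μ₂} ≤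
      Ecost a c μ₁ μ₂ := by
  have hEnonneg : 0 ≤ Ecost a c μ₁ μ₂ := by
    refine Real.sInf_nonneg ?_
    rintro r ⟨γ, hγ, hγc, rfl⟩
    exact add_nonneg (add_nonneg (mul_nonneg ha.le (tvDist_nonneg _ _))
      (mul_nonneg ha.le (tvDist_nonneg _ _))) ENNReal.toReal_nonneg
  refine Real.sSup_le ?_ hEnonneg
  rintro r ⟨φ₁, φ₂, hφc, hb1, hb2, rfl⟩
  refine le_csInf ⟨EcostPlan a c μ₁ μ₂ 0, 0, inferInstance, by simp, rfl⟩ ?_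
  rintro t ⟨γ, hγ, hγc, rfl⟩
  haveI := hγ
  set f : X → ℝ := fun x => min (φ₁ x) a with hfdef
  set g : X → ℝ := fun x => min (φ₂ x) a with hgdef
  have hfc : Continuous f := φ₁.continuous.min continuous_const
  have hgc : Continuous g := φ₂.continuous.min continuous_const
  have hfb : ∀ x, |f x| ≤ a := fun x =>
    abs_le.mpr ⟨le_min (hb1 x) (by linarith), min_le_right _ _⟩
  have hgb : ∀ x, |g x| ≤ a := fun x =>
    abs_le.mpr ⟨le_min (hb2 x) (by linarith), min_le_right _ _⟩
  set γ₁ := γ.map Prod.fst with hγ₁def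
  set γ₂ := γ.map Prod.snd with hγ₂def
  haveI : IsFiniteMeasure γ₁ := γ.isFiniteMeasure_map Prod.fst
  haveI : IsFiniteMeasure γ₂ := γ.isFiniteMeasure_map Prod.snd
  have hfμ : Integrable f μ₁ := integrable_of_cont_bdd μ₁ hfc hfb
  have hgμ : Integrable g μ₂ := integrable_of_cont_bdd μ₂ hgc hgb
  have hfγ₁ : Integrable f γ₁ := integrable_of_cont_bdd γ₁ hfc hfb
  have hgγ₂ : Integrable g γ₂ := integrable_of_cont_bdd γ₂ hgc hgb
  -- rewrite the IFun integrals
  have hI1 : ∫ x, IFun a (φ₁ x) ∂μ₁ = ∫ x, f x ∂μ₁ :=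
    integral_congr_ae (ae_of_all _ fun x => IFun_eq_min ha (hb1 x))
  have hI2 : ∫ x, IFun a (φ₂ x) ∂μ₂ = ∫ x, g x ∂μ₂ :=
    integral_congr_ae (ae_of_all _ fun x => IFun_eq_min ha (hb2 x))
  -- step 1: change measures
  have step1 : ∫ x, f x ∂μ₁ ≤ ∫ x, f x ∂γ₁ + a * tvDist μ₁ γ₁ :=
    integral_le_integral_add_tv μ₁ γ₁ hfμ hfγ₁ ha.le hfb
  have step2 : ∫ x, g x ∂μ₂ ≤ ∫ x, g x ∂γ₂ + a * tvDist μ₂ γ₂ :=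
    integral_le_integral_add_tv μ₂ γ₂ hgμ hgγ₂ ha.le hgb
  -- step 3: bound the plan integrals by the cost
  have hmap1 : ∫ x, f x ∂γ₁ = ∫ z : X × X, f z.1 ∂γ := by
    rw [hγ₁def, integral_map measurable_fst.aemeasurable]
    exact hfc.aestronglyMeasurable
  have hmap2 : ∫ x, g x ∂γ₂ = ∫ z : X × X, g z.2 ∂γ := by
    rw [hγ₂def, integral_map measurable_snd.aemeasurable]
    exact hgc.aestronglyMeasurable
  have hF : Integrable (fun z : X × X => f z.1) γ :=
    integrable_of_cont_bdd γ (hfc.comp continuous_fst) (fun z => hfb z.1)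
  have hG : Integrable (fun z : X × X => g z.2) γ :=
    integrable_of_cont_bdd γ (hgc.comp continuous_snd) (fun z => hgb z.2)
  set h : X × X → ℝ := fun z => f z.1 + g z.2 with hhdef
  have hhc : Continuous h := (hfc.comp continuous_fst).add (hgc.comp continuous_snd)
  have hhb : ∀ z, |h z| ≤ a + a := fun z =>
    (abs_add_le _ _).trans (add_le_add (hfb z.1) (hgb z.2))
  have hplusb : ∀ z, |max (h z) 0| ≤ a + a := by
    intro z
    refine (abs_max_le_max_abs_abs).trans ?_
    simp only [abs_zero]
    exact max_le (hhb z) (by linarith)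
  have hplus : Integrable (fun z => max (h z) 0) γ :=
    integrable_of_cont_bdd γ (hhc.max continuous_const) hplusb
  have hsum : ∫ z : X × X, f z.1 ∂γ + ∫ z : X × X, g z.2 ∂γ = ∫ z, h z ∂γ :=
    (integral_add hF hG).symm
  have hmono : ∫ z, h z ∂γ ≤ ∫ z, max (h z) 0 ∂γ :=
    integral_mono (hF.add hG) hplus (fun z => le_max_left _ _)
  have hofreal : ENNReal.ofReal (∫ z, max (h z) 0 ∂γ) =
      ∫⁻ z, ENNReal.ofReal (max (h z) 0) ∂γ :=
    ofReal_integral_eq_lintegral_ofReal hplus (ae_of_all _ fun z => le_max_right _ _)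
  have hptwise : ∀ z : X × X, ENNReal.ofReal (max (h z) 0) ≤ c z := by
    intro z
    rcases le_total (h z) 0 with h0 | h0
    · rw [max_eq_right h0]; simp
    · rw [max_eq_left h0]
      have : h z ≤ φ₁ z.1 + φ₂ z.2 := add_le_add (min_le_left _ _) (min_le_left _ _)
      refine le_trans (ENNReal.ofReal_le_ofReal this) ?_
      have := hφc z.1 z.2
      simpa using this
  have hlint : ∫⁻ z, ENNReal.ofReal (max (h z) 0) ∂γ ≤ ∫⁻ z, c z ∂γ :=
    lintegral_mono hptwise
  have step3 : ∫ z, h z ∂γ ≤ (∫⁻ z, c z ∂γ).toReal := by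
    have h1 : ∫ z, max (h z) 0 ∂γ = (ENNReal.ofReal (∫ z, max (h z) 0 ∂γ)).toReal :=
      (ENNReal.toReal_ofReal (integral_nonneg fun z => le_max_right _ _)).symm
    calc ∫ z, h z ∂γ ≤ ∫ z, max (h z) 0 ∂γ := hmono
      _ = (ENNReal.ofReal (∫ z, max (h z) 0 ∂γ)).toReal := h1
      _ ≤ (∫⁻ z, c z ∂γ).toReal :=
        ENNReal.toReal_mono hγc.ne (hofreal ▸ hlint)
  rw [hI1, hI2, EcostPlan, ← hγ₁def, ← hγ₂def]
  linarith [step1, step2, step3, hsum, hmap1, hmap2]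
end
end

section
/- Let (X,d) be a Polish metric space, a,b>0 and p≥1, and let c(x,y) := (b·d(x,y))^p for all x,y ∈ X. Then for every μ₁, μ₂ ∈ M(X), W̃_p^{a,b}(μ₁,μ₂) = (E_c(μ₁,μ₂))^{1/p}. -/
open MeasureTheory Set Filter Topology
open scoped ENNReal

noncomputable section

variable {X : Type*} [MetricSpace X] [MeasurableSpace X]

/-! ### Auxiliary lemmas -/

lemma real_le_of_forall_pos_le_add {x y : ℝ} (h : ∀ ε : ℝ, 0 < ε → x ≤ y + ε) : x ≤ y := by
  by_contra hlt
  push_neg at hlt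
  have := h ((x - y) / 2) (by linarith)
  linarith

lemma measure_le_sub_add (μ ν : Measure X) [IsFiniteMeasure μ] [IsFiniteMeasure ν] :
    μ ≤ (μ - ν) + ν := by
  obtain ⟨s, hs, h₁, h₂⟩ := hahn_decomposition (μ := μ) (ν := ν)
  rw [Measure.le_iff]
  intro t ht
  have hres : ν.restrict s ≤ μ.restrict s := by
    rw [Measure.le_iff]
    intro u hu
    rw [Measure.restrict_apply hu, Measure.restrict_apply hu]
    exact h₁ _ (hu.inter hs) inter_subset_right
  have key : (μ - ν) (t ∩ s) = μ (t ∩ s) - ν (t ∩ s) := by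
    calc (μ - ν) (t ∩ s) = (μ - ν).restrict s t := (Measure.restrict_apply ht).symm
      _ = (μ.restrict s - ν.restrict s) t := by
          rw [Measure.restrict_sub_eq_restrict_sub_restrict hs]
      _ = μ.restrict s t - ν.restrict s t := Measure.sub_apply ht hres
      _ = μ (t ∩ s) - ν (t ∩ s) := by rw [Measure.restrict_apply ht, Measure.restrict_apply ht]
  calc μ t = μ (t ∩ s) + μ (t \ s) := (measure_inter_add_diff t hs).symm
    _ ≤ ((μ - ν) (t ∩ s) + ν (t ∩ s)) + ν (t \ s) := by
        refine add_le_add ?_ (h₂ _ (ht.diff hs) fun x hx => hx.2)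
        rw [key]
        exact le_tsub_add
    _ = (μ - ν) (t ∩ s) + ν t := by rw [add_assoc, measure_inter_add_diff t hs]
    _ ≤ ((μ - ν) + ν) t := by
        rw [Measure.add_apply]
        exact add_le_add (measure_mono inter_subset_left) le_rfl

lemma measure_sub_le_sub_add (μ ν ρ : Measure X) [IsFiniteMeasure μ] [IsFiniteMeasure ν]
    [IsFiniteMeasure ρ] : μ - ρ ≤ (μ - ν) + (ν - ρ) := by
  apply Measure.sub_le_of_le_add
  calc μ ≤ (μ - ν) + ν := measure_le_sub_add μ ν
    _ ≤ (μ - ν) + ((ν - ρ) + ρ) := add_le_add le_rfl (measure_le_sub_add ν ρ)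
    _ = (μ - ν) + (ν - ρ) + ρ := (add_assoc _ _ _).symm

lemma measure_eq_zero_of_isEmpty {Y : Type*} [MeasurableSpace Y] [IsEmpty Y]
    (μ : Measure Y) : μ = 0 := by
  ext s _
  simp [Set.eq_empty_of_isEmpty s]

lemma tvDist_triangle (μ ν ρ : Measure X) [IsFiniteMeasure μ] [IsFiniteMeasure ν]
    [IsFiniteMeasure ρ] : tvDist μ ρ ≤ tvDist μ ν + tvDist ν ρ := by
  have h1 : (μ - ρ) univ ≤ (μ - ν) univ + (ν - ρ) univ := by
    have h := measure_sub_le_sub_add μ ν ρ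
    simpa [Measure.add_apply] using Measure.le_iff'.1 h univ
  have h2 : (ρ - μ) univ ≤ (ρ - ν) univ + (ν - μ) univ := by
    have h := measure_sub_le_sub_add ρ ν μ
    simpa [Measure.add_apply] using Measure.le_iff'.1 h univ
  have fin : ∀ (α β : Measure X), IsFiniteMeasure α → (α - β) univ ≠ ⊤ := by
    intro α β hα
    exact ((Measure.le_iff'.1 Measure.sub_le univ).trans_lt (hα.measure_univ_lt_top)).ne
  unfold tvDist
  have hle : (μ - ρ) univ + (ρ - μ) univ ≤
      ((μ - ν) univ + (ν - μ) univ) + ((ν - ρ) univ + (ρ - ν) univ) := by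
    calc (μ - ρ) univ + (ρ - μ) univ
        ≤ ((μ - ν) univ + (ν - ρ) univ) + ((ρ - ν) univ + (ν - μ) univ) := add_le_add h1 h2
      _ = ((μ - ν) univ + (ν - μ) univ) + ((ν - ρ) univ + (ρ - ν) univ) := by
          ring
  refine le_trans (ENNReal.toReal_mono ?_ hle) ?_
  · exact ENNReal.add_ne_top.2 ⟨ENNReal.add_ne_top.2 ⟨fin _ _ ‹_›, fin _ _ ‹_›⟩,
      ENNReal.add_ne_top.2 ⟨fin _ _ ‹_›, fin _ _ ‹_›⟩⟩
  · rw [ENNReal.toReal_add (ENNReal.add_ne_top.2 ⟨fin _ _ ‹_›, fin _ _ ‹_›⟩)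
      (ENNReal.add_ne_top.2 ⟨fin _ _ ‹_›, fin _ _ ‹_›⟩)]

lemma tvDist_of_le {μ ν : Measure X} [IsFiniteMeasure μ] (h : ν ≤ μ) :
    tvDist μ ν = (μ univ - ν univ).toReal := by
  haveI : IsFiniteMeasure ν := isFiniteMeasure_of_le μ h
  unfold tvDist
  rw [Measure.sub_eq_zero_of_le h, Measure.sub_apply MeasurableSet.univ h]
  simp

lemma tvDist_zero_right (μ : Measure X) [IsFiniteMeasure μ] : tvDist μ 0 = (μ univ).toReal := by
  rw [tvDist_of_le (Measure.zero_le μ)]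
  simp

lemma ennreal_add_rpow_le (p : ℝ) (hp0 : 0 ≤ p) (u v : ℝ≥0∞) :
    (u + v) ^ p ≤ 2 ^ p * (u ^ p + v ^ p) := by
  have h1 : u + v ≤ 2 * max u v := by
    rw [two_mul]
    exact add_le_add (le_max_left _ _) (le_max_right _ _)
  calc (u + v) ^ p ≤ (2 * max u v) ^ p := ENNReal.rpow_le_rpow h1 hp0
    _ = 2 ^ p * (max u v) ^ p := ENNReal.mul_rpow_of_nonneg _ _ hp0
    _ ≤ 2 ^ p * (u ^ p + v ^ p) := by
        gcongr
        rcases le_total u v with h | h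
        · rw [max_eq_right h]; exact le_add_self
        · rw [max_eq_left h]; exact le_add_right le_rfl

/-! ### The key identity `genWPow = Ecost` -/

theorem genWPow_eq_Ecost
    {X : Type*} [MetricSpace X] [SecondCountableTopology X] [MeasurableSpace X] [BorelSpace X]
    (a b p : ℝ) (ha : 0 < a) (hb : 0 < b) (hp : 1 ≤ p)
    (μ₁ μ₂ : Measure X) [IsFiniteMeasure μ₁] [IsFiniteMeasure μ₂] :
    genWPow a b p μ₁ μ₂ =
      Ecost a (fun z : X × X => ENNReal.ofReal (b * dist z.1 z.2) ^ p) μ₁ μ₂ := by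
  have hp0 : (0 : ℝ) ≤ p := le_trans zero_le_one hp
  set c : X × X → ℝ≥0∞ := fun z => ENNReal.ofReal (b * dist z.1 z.2) ^ p with hcdef
  set C : ℝ≥0∞ := ENNReal.ofReal b ^ p with hCdef
  have hCne_top : C ≠ ⊤ := (ENNReal.rpow_lt_top_of_nonneg hp0 ENNReal.ofReal_ne_top).ne
  have hCtoReal : C.toReal = b ^ p := by
    rw [hCdef, ← ENNReal.toReal_rpow, ENNReal.toReal_ofReal hb.le]
  have hc_eq : ∀ z : X × X, c z = C * edist z.1 z.2 ^ p := by
    intro z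
    show ENNReal.ofReal (b * dist z.1 z.2) ^ p = ENNReal.ofReal b ^ p * edist z.1 z.2 ^ p
    rw [ENNReal.ofReal_mul hb.le, ENNReal.mul_rpow_of_nonneg _ _ hp0, ← edist_dist]
  have hmeas_d : Measurable fun z : X × X => edist z.1 z.2 ^ p :=
    (ENNReal.continuous_rpow_const.comp continuous_edist).measurable
  have hmeas_c : Measurable c := by
    have hfun : c = fun z : X × X => C * edist z.1 z.2 ^ p := funext hc_eq
    rw [hfun]
    exact hmeas_d.const_mul C
  -- the two defining sets
  set S : Set ℝ := {r : ℝ | ∃ μ' ν' : Measure X, MemMp p μ' ∧ MemMp p ν' ∧ μ' univ = ν' univ ∧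
      r = a * tvDist μ₁ μ' + a * tvDist μ₂ ν' + b ^ p * (WpPow p μ' ν').toReal} with hSdef
  set T : Set ℝ := {r : ℝ | ∃ γ : Measure (X × X), IsFiniteMeasure γ ∧ (∫⁻ z, c z ∂γ) < ⊤ ∧
      r = EcostPlan a c μ₁ μ₂ γ} with hTdef
  have hgen : genWPow a b p μ₁ μ₂ = sInf S := rfl
  have hEco : Ecost a c μ₁ μ₂ = sInf T := rfl
  have hbp_pos : (0 : ℝ) < b ^ p := Real.rpow_pos_of_pos hb p
  have hSbdd : BddBelow S := by
    refine ⟨0, fun r hr => ?_⟩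
    obtain ⟨μ', ν', _, _, _, rfl⟩ := hr
    have h1 := tvDist_nonneg μ₁ μ'
    have h2 := tvDist_nonneg μ₂ ν'
    have h3 : (0:ℝ) ≤ (WpPow p μ' ν').toReal := ENNReal.toReal_nonneg
    nlinarith
  have hTbdd : BddBelow T := by
    refine ⟨0, fun r hr => ?_⟩
    obtain ⟨γ, _, _, rfl⟩ := hr
    have h1 := tvDist_nonneg μ₁ (γ.map Prod.fst)
    have h2 := tvDist_nonneg μ₂ (γ.map Prod.snd)
    have h3 : (0:ℝ) ≤ (∫⁻ z, c z ∂γ).toReal := ENNReal.toReal_nonneg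
    unfold EcostPlan
    nlinarith
  have hTne : T.Nonempty := by
    refine ⟨EcostPlan a c μ₁ μ₂ 0, 0, inferInstance, ?_, rfl⟩
    simp
  rcases isEmpty_or_nonempty X with hX | hX
  · -- the empty case: both sides are `0`
    have hSempty : S = ∅ := by
      rw [eq_empty_iff_forall_notMem]
      rintro r ⟨μ', ν', ⟨_, x₀, _⟩, _⟩
      exact hX.elim x₀
    have hT0 : ∀ r ∈ T, r = 0 := by
      rintro r ⟨γ, _, _, rfl⟩
      haveI : IsEmpty (X × X) := ⟨fun z => hX.false z.1⟩
      rw [measure_eq_zero_of_isEmpty γ, measure_eq_zero_of_isEmpty μ₁,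
        measure_eq_zero_of_isEmpty μ₂]
      unfold EcostPlan
      simp [tvDist]
    have hTeq : T = {0} := by
      apply Subset.antisymm
      · intro r hr; exact hT0 r hr
      · intro r hr
        rw [mem_singleton_iff] at hr
        subst hr
        obtain ⟨r', hr'⟩ := hTne
        have := hT0 r' hr'
        rwa [this] at hr'
    rw [hgen, hEco, hSempty, hTeq, Real.sInf_empty, csInf_singleton]
  · -- the nonempty case
    obtain ⟨x₀⟩ := hX
    have hSne : S.Nonempty := by
      refine ⟨_, 0, 0, ⟨inferInstance, x₀, by simp⟩, ⟨inferInstance, x₀, by simp⟩, rfl, rfl⟩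
    rw [hgen, hEco]
    apply le_antisymm
    · -- `sInf S ≤ sInf T`
      apply le_csInf hTne
      rintro r ⟨γ, hγfin, hγcost, rfl⟩
      apply real_le_of_forall_pos_le_add
      intro ε hε
      set δ : ℝ := ε / (2 * a + 1) with hδdef
      have hδ : 0 < δ := by positivity
      -- truncation of γ to big balls
      set K : ℕ → Set (X × X) :=
        fun n => (Metric.closedBall x₀ n) ×ˢ (Metric.closedBall x₀ n) with hKdef
      have hKmeas : ∀ n, MeasurableSet (K n) :=
        fun n => measurableSet_closedBall.prod measurableSet_closedBall
      have hKmono : Monotone K := by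
        intro m n hmn
        exact Set.prod_mono (Metric.closedBall_subset_closedBall (by exact_mod_cast hmn))
          (Metric.closedBall_subset_closedBall (by exact_mod_cast hmn))
      have hKunion : ⋃ n, K n = univ := by
        rw [eq_univ_iff_forall]
        intro z
        obtain ⟨n, hn⟩ := exists_nat_ge (max (dist z.1 x₀) (dist z.2 x₀))
        exact mem_iUnion.2 ⟨n, ⟨by simpa using le_trans (le_max_left _ _) hn,
          by simpa using le_trans (le_max_right _ _) hn⟩⟩
      have htend : Tendsto (fun n => γ (K n)) atTop (𝓝 (γ univ)) := by
        rw [← hKunion]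
        exact tendsto_measure_iUnion_atTop hKmono
      have htendR : Tendsto (fun n => (γ (K n)).toReal) atTop (𝓝 (γ univ).toReal) :=
        (ENNReal.tendsto_toReal (measure_ne_top γ univ)).comp htend
      have hev : ∀ᶠ n in atTop, (γ univ).toReal - δ < (γ (K n)).toReal :=
        htendR.eventually (eventually_gt_nhds (by linarith))
      obtain ⟨n, hn⟩ := hev.exists
      set γn : Measure (X × X) := γ.restrict (K n) with hγndef
      haveI : IsFiniteMeasure γn := by
        constructor
        rw [hγndef, Measure.restrict_apply_univ]
        exact lt_of_le_of_lt (measure_mono (subset_univ _)) hγfin.measure_univ_lt_top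
      set μ' : Measure X := γn.map Prod.fst with hμ'def
      set ν' : Measure X := γn.map Prod.snd with hν'def
      haveI : IsFiniteMeasure μ' := by
        constructor
        rw [hμ'def, Measure.map_apply measurable_fst MeasurableSet.univ]
        exact lt_of_le_of_lt (measure_mono (subset_univ _)) this.measure_univ_lt_top
      haveI : IsFiniteMeasure ν' := by
        constructor
        rw [hν'def, Measure.map_apply measurable_snd MeasurableSet.univ]
        exact lt_of_le_of_lt (measure_mono (subset_univ _)) ‹IsFiniteMeasure γn›.measure_univ_lt_top
      have hμ'univ : μ' univ = γn univ := by
        rw [hμ'def, Measure.map_apply measurable_fst MeasurableSet.univ, preimage_univ]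
      have hν'univ : ν' univ = γn univ := by
        rw [hν'def, Measure.map_apply measurable_snd MeasurableSet.univ, preimage_univ]
      have hγn_le : γn univ ≤ γ univ := by
        rw [hγndef, Measure.restrict_apply_univ]
        exact measure_mono (subset_univ _)
      -- tv distance between truncated and full marginals
      have htv_fst : tvDist (γ.map Prod.fst) μ' ≤ δ := by
        have hle : μ' ≤ γ.map Prod.fst :=
          Measure.map_mono Measure.restrict_le_self measurable_fst
        rw [tvDist_of_le hle]
        have hfst_univ : (γ.map Prod.fst) univ = γ univ := by
          rw [Measure.map_apply measurable_fst MeasurableSet.univ, preimage_univ]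
        rw [hfst_univ, hμ'univ,
          ENNReal.toReal_sub_of_le hγn_le (measure_ne_top γ univ)]
        have : γn univ = γ (K n) := by rw [hγndef, Measure.restrict_apply_univ]
        rw [this]
        linarith
      have htv_snd : tvDist (γ.map Prod.snd) ν' ≤ δ := by
        have hle : ν' ≤ γ.map Prod.snd :=
          Measure.map_mono Measure.restrict_le_self measurable_snd
        rw [tvDist_of_le hle]
        have hsnd_univ : (γ.map Prod.snd) univ = γ univ := by
          rw [Measure.map_apply measurable_snd MeasurableSet.univ, preimage_univ]
        rw [hsnd_univ, hν'univ,
          ENNReal.toReal_sub_of_le hγn_le (measure_ne_top γ univ)]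
        have : γn univ = γ (K n) := by rw [hγndef, Measure.restrict_apply_univ]
        rw [this]
        linarith
      -- moments of the truncated marginals
      have hmom_fst : ∫⁻ x, edist x x₀ ^ p ∂μ' < ⊤ := by
        have hmeas1 : Measurable fun x : X => edist x x₀ ^ p :=
          (ENNReal.continuous_rpow_const.comp (continuous_id.edist continuous_const)).measurable
        rw [hμ'def, lintegral_map hmeas1 measurable_fst]
        calc ∫⁻ z, edist z.1 x₀ ^ p ∂γn
            ≤ ∫⁻ _, (ENNReal.ofReal n) ^ p ∂γn := by
              rw [hγndef]
              refine setLIntegral_mono' (hKmeas n) (fun z hz => ?_)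
              refine ENNReal.rpow_le_rpow ?_ hp0
              rw [edist_dist]
              exact ENNReal.ofReal_le_ofReal hz.1
          _ = (ENNReal.ofReal n) ^ p * γn univ := by rw [lintegral_const]
          _ < ⊤ := ENNReal.mul_lt_top
              (ENNReal.rpow_lt_top_of_nonneg hp0 ENNReal.ofReal_ne_top)
              (‹IsFiniteMeasure γn›.measure_univ_lt_top)
      have hmom_snd : ∫⁻ x, edist x x₀ ^ p ∂ν' < ⊤ := by
        have hmeas1 : Measurable fun x : X => edist x x₀ ^ p :=
          (ENNReal.continuous_rpow_const.comp (continuous_id.edist continuous_const)).measurable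
        rw [hν'def, lintegral_map hmeas1 measurable_snd]
        calc ∫⁻ z, edist z.2 x₀ ^ p ∂γn
            ≤ ∫⁻ _, (ENNReal.ofReal n) ^ p ∂γn := by
              rw [hγndef]
              refine setLIntegral_mono' (hKmeas n) (fun z hz => ?_)
              refine ENNReal.rpow_le_rpow ?_ hp0
              rw [edist_dist]
              exact ENNReal.ofReal_le_ofReal hz.2
          _ = (ENNReal.ofReal n) ^ p * γn univ := by rw [lintegral_const]
          _ < ⊤ := ENNReal.mul_lt_top
              (ENNReal.rpow_lt_top_of_nonneg hp0 ENNReal.ofReal_ne_top)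
              (‹IsFiniteMeasure γn›.measure_univ_lt_top)
      -- bound on the Wasserstein part
      have hWle : WpPow p μ' ν' ≤ ∫⁻ z, edist z.1 z.2 ^ p ∂γn := by
        by_cases h0 : γn univ = 0
        · have : μ' univ = 0 := by rw [hμ'univ, h0]
          rw [WpPow, this, zero_mul]
          exact zero_le
        · set π : Measure (X × X) := (γn univ)⁻¹ • γn with hπdef
          have hπmem : π ∈ plans μ' ν' := by
            refine ⟨⟨?_⟩, ?_, ?_⟩
            · rw [hπdef, Measure.smul_apply, smul_eq_mul,
                ENNReal.inv_mul_cancel h0 (measure_ne_top γn univ)]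
            · intro A hA
              rw [hμ'univ, hπdef, Measure.smul_apply, smul_eq_mul, ← mul_assoc,
                ENNReal.mul_inv_cancel h0 (measure_ne_top γn univ), one_mul,
                Set.prod_univ, hμ'def, Measure.map_apply measurable_fst hA]
            · intro B hB
              rw [hν'univ, hπdef, Measure.smul_apply, smul_eq_mul, ← mul_assoc,
                ENNReal.mul_inv_cancel h0 (measure_ne_top γn univ), one_mul,
                Set.univ_prod, hν'def, Measure.map_apply measurable_snd hB]
          calc WpPow p μ' ν'
              ≤ μ' univ * ∫⁻ z : X × X, edist z.1 z.2 ^ p ∂π := by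
                unfold WpPow
                exact mul_le_mul_right (iInf₂_le π hπmem) _
            _ = γn univ * ((γn univ)⁻¹ * ∫⁻ z : X × X, edist z.1 z.2 ^ p ∂γn) := by
                rw [hμ'univ, hπdef, lintegral_smul_measure, smul_eq_mul]
            _ = ∫⁻ z : X × X, edist z.1 z.2 ^ p ∂γn := by
                rw [← mul_assoc, ENNReal.mul_inv_cancel h0 (measure_ne_top γn univ), one_mul]
      -- the element of `S` given by the truncated marginals
      have hmem : a * tvDist μ₁ μ' + a * tvDist μ₂ ν' + b ^ p * (WpPow p μ' ν').toReal ∈ S :=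
        ⟨μ', ν', ⟨‹IsFiniteMeasure μ'›, x₀, hmom_fst⟩, ⟨‹IsFiniteMeasure ν'›, x₀, hmom_snd⟩,
          by rw [hμ'univ, hν'univ], rfl⟩
      refine le_trans (csInf_le hSbdd hmem) ?_
      have ht1 : tvDist μ₁ μ' ≤ tvDist μ₁ (γ.map Prod.fst) + δ := by
        haveI : IsFiniteMeasure (γ.map Prod.fst) := ⟨by
          rw [Measure.map_apply measurable_fst MeasurableSet.univ, preimage_univ]
          exact hγfin.measure_univ_lt_top⟩
        exact le_trans (tvDist_triangle μ₁ (γ.map Prod.fst) μ') (by linarith [htv_fst])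
      have ht2 : tvDist μ₂ ν' ≤ tvDist μ₂ (γ.map Prod.snd) + δ := by
        haveI : IsFiniteMeasure (γ.map Prod.snd) := ⟨by
          rw [Measure.map_apply measurable_snd MeasurableSet.univ, preimage_univ]
          exact hγfin.measure_univ_lt_top⟩
        exact le_trans (tvDist_triangle μ₂ (γ.map Prod.snd) ν') (by linarith [htv_snd])
      have hcost : b ^ p * (WpPow p μ' ν').toReal ≤ (∫⁻ z, c z ∂γ).toReal := by
        have h1 : C * WpPow p μ' ν' ≤ ∫⁻ z, c z ∂γ := by
          calc C * WpPow p μ' ν' ≤ C * ∫⁻ z : X × X, edist z.1 z.2 ^ p ∂γn :=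
                mul_le_mul_right hWle C
            _ = ∫⁻ z, c z ∂γn := by
                rw [← lintegral_const_mul C hmeas_d]
                exact lintegral_congr fun z => (hc_eq z).symm
            _ ≤ ∫⁻ z, c z ∂γ := lintegral_mono' Measure.restrict_le_self le_rfl
        calc b ^ p * (WpPow p μ' ν').toReal = (C * WpPow p μ' ν').toReal := by
              rw [ENNReal.toReal_mul, hCtoReal]
          _ ≤ (∫⁻ z, c z ∂γ).toReal := ENNReal.toReal_mono hγcost.ne h1
      have hA : a * tvDist μ₁ μ' ≤ a * tvDist μ₁ (γ.map Prod.fst) + a * δ := by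
        calc a * tvDist μ₁ μ' ≤ a * (tvDist μ₁ (γ.map Prod.fst) + δ) :=
              mul_le_mul_of_nonneg_left ht1 ha.le
          _ = a * tvDist μ₁ (γ.map Prod.fst) + a * δ := mul_add a _ _
      have hB : a * tvDist μ₂ ν' ≤ a * tvDist μ₂ (γ.map Prod.snd) + a * δ := by
        calc a * tvDist μ₂ ν' ≤ a * (tvDist μ₂ (γ.map Prod.snd) + δ) :=
              mul_le_mul_of_nonneg_left ht2 ha.le
          _ = a * tvDist μ₂ (γ.map Prod.snd) + a * δ := mul_add a _ _
      have h2aδ : a * δ + a * δ ≤ ε := by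
        have hpos : (0:ℝ) < 2 * a + 1 := by linarith
        have hkey : δ * (2 * a + 1) = ε := div_mul_cancel₀ ε hpos.ne'
        nlinarith [hδ]
      unfold EcostPlan
      linarith
    · -- `sInf T ≤ sInf S`
      apply le_csInf hSne
      rintro r ⟨μ', ν', ⟨hμ'fin, x₀', hμ'mom⟩, ⟨hν'fin, x₁, hν'mom⟩, hmass, rfl⟩
      haveI := hμ'fin
      haveI := hν'fin
      apply real_le_of_forall_pos_le_add
      intro ε hε
      by_cases h0 : μ' univ = 0
      · -- degenerate case: both measures vanish
        have hμ'0 : μ' = 0 := Measure.measure_univ_eq_zero.mp h0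
        have hν'0 : ν' = 0 := Measure.measure_univ_eq_zero.mp (by rw [← hmass, h0])
        have hmem : EcostPlan a c μ₁ μ₂ 0 ∈ T := ⟨0, inferInstance, by simp, rfl⟩
        refine le_trans (csInf_le hTbdd hmem) ?_
        have hW : WpPow p μ' ν' = 0 := by unfold WpPow; rw [h0, zero_mul]
        rw [hW, hμ'0, hν'0]
        unfold EcostPlan
        simp only [Measure.map_zero, lintegral_zero_measure, ENNReal.toReal_zero, add_zero,
          mul_zero]
        linarith
      · -- nondegenerate case
        set m := μ' univ with hmdef
        have hmtop : m ≠ ⊤ := measure_ne_top μ' univ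
        set π₀ : Measure (X × X) := ((m * m)⁻¹) • (μ'.prod ν') with hπ₀def
        have hprod_univ : (μ'.prod ν') univ = m * m := by
          rw [← univ_prod_univ, Measure.prod_prod, ← hmass, ← hmdef]
        have hmm0 : m * m ≠ 0 := mul_ne_zero h0 h0
        have hmmtop : m * m ≠ ⊤ := ENNReal.mul_ne_top hmtop hmtop
        have hπ₀mem : π₀ ∈ plans μ' ν' := by
          refine ⟨⟨?_⟩, fun A hA => ?_, fun B hB => ?_⟩
          · rw [hπ₀def, Measure.smul_apply, smul_eq_mul, hprod_univ,
              ENNReal.inv_mul_cancel hmm0 hmmtop]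
          · rw [hπ₀def, Measure.smul_apply, smul_eq_mul, Measure.prod_prod, ← hmass, ← hmdef]
            have hring : m * ((m * m)⁻¹ * (μ' A * m)) = m * m * (m * m)⁻¹ * μ' A := by ring
            rw [hring, ENNReal.mul_inv_cancel hmm0 hmmtop, one_mul]
          · rw [hπ₀def, Measure.smul_apply, smul_eq_mul, Measure.prod_prod, ← hmass, ← hmdef]
            have hring : m * ((m * m)⁻¹ * (m * ν' B)) = m * m * (m * m)⁻¹ * ν' B := by ring
            rw [hring, ENNReal.mul_inv_cancel hmm0 hmmtop, one_mul]
        have hmeas1 : Measurable fun x : X => edist x x₀' ^ p :=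
          (ENNReal.continuous_rpow_const.comp (continuous_id.edist continuous_const)).measurable
        have hmeas2 : Measurable fun x : X => edist x x₁ ^ p :=
          (ENNReal.continuous_rpow_const.comp (continuous_id.edist continuous_const)).measurable
        have hm1' : Measurable fun z : X × X => edist z.1 x₀' ^ p := hmeas1.comp measurable_fst
        have hm2' : Measurable fun z : X × X => edist z.2 x₁ ^ p := hmeas2.comp measurable_snd
        have hI1 : ∫⁻ z : X × X, edist z.1 x₀' ^ p ∂(μ'.prod ν')
            = m * ∫⁻ x, edist x x₀' ^ p ∂μ' := by
          rw [← lintegral_map hmeas1 measurable_fst, Measure.map_fst_prod,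
            lintegral_smul_measure, ← hmass, smul_eq_mul]
        have hI2 : ∫⁻ z : X × X, edist z.2 x₁ ^ p ∂(μ'.prod ν')
            = m * ∫⁻ x, edist x x₁ ^ p ∂ν' := by
          rw [← lintegral_map hmeas2 measurable_snd, Measure.map_snd_prod,
            lintegral_smul_measure, ← hmdef, smul_eq_mul]
        have hptwise : ∀ z : X × X, edist z.1 z.2 ^ p ≤
            2 ^ p * edist z.1 x₀' ^ p + 2 ^ p * 2 ^ p * (edist x₀' x₁ ^ p + edist z.2 x₁ ^ p) := by
          intro z
          have h1 : edist z.1 z.2 ≤ edist z.1 x₀' + edist x₀' z.2 := edist_triangle _ _ _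
          have h2 : edist x₀' z.2 ≤ edist x₀' x₁ + edist z.2 x₁ := by
            rw [edist_comm z.2 x₁]
            exact edist_triangle _ _ _
          calc edist z.1 z.2 ^ p ≤ (edist z.1 x₀' + edist x₀' z.2) ^ p :=
                ENNReal.rpow_le_rpow h1 hp0
            _ ≤ 2 ^ p * (edist z.1 x₀' ^ p + edist x₀' z.2 ^ p) := ennreal_add_rpow_le p hp0 _ _
            _ ≤ 2 ^ p * (edist z.1 x₀' ^ p + 2 ^ p * (edist x₀' x₁ ^ p + edist z.2 x₁ ^ p)) := by
                gcongr
                calc edist x₀' z.2 ^ p ≤ (edist x₀' x₁ + edist z.2 x₁) ^ p :=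
                      ENNReal.rpow_le_rpow h2 hp0
                  _ ≤ 2 ^ p * (edist x₀' x₁ ^ p + edist z.2 x₁ ^ p) :=
                      ennreal_add_rpow_le p hp0 _ _
            _ = 2 ^ p * edist z.1 x₀' ^ p
                + 2 ^ p * 2 ^ p * (edist x₀' x₁ ^ p + edist z.2 x₁ ^ p) := by ring
        have h2p_top : (2 : ℝ≥0∞) ^ p ≠ ⊤ :=
          (ENNReal.rpow_lt_top_of_nonneg hp0 (by norm_num)).ne
        have hedist_top : edist x₀' x₁ ^ p ≠ ⊤ :=
          (ENNReal.rpow_lt_top_of_nonneg hp0 (edist_ne_top _ _)).ne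
        have hprod_fin : ∫⁻ z : X × X, edist z.1 z.2 ^ p ∂(μ'.prod ν') < ⊤ := by
          calc ∫⁻ z : X × X, edist z.1 z.2 ^ p ∂(μ'.prod ν')
              ≤ ∫⁻ z : X × X, (2 ^ p * edist z.1 x₀' ^ p
                  + 2 ^ p * 2 ^ p * (edist x₀' x₁ ^ p + edist z.2 x₁ ^ p)) ∂(μ'.prod ν') :=
                lintegral_mono hptwise
            _ = 2 ^ p * (m * ∫⁻ x, edist x x₀' ^ p ∂μ')
                + 2 ^ p * 2 ^ p * (edist x₀' x₁ ^ p * (m * m)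
                  + m * ∫⁻ x, edist x x₁ ^ p ∂ν') := by
                rw [lintegral_add_left (hm1'.const_mul _),
                  lintegral_const_mul _ hm1',
                  lintegral_const_mul _ (f := fun z : X × X => edist x₀' x₁ ^ p + edist z.2 x₁ ^ p) (measurable_const.add hm2'),
                  lintegral_add_left measurable_const, lintegral_const, hprod_univ, hI1, hI2]
            _ < ⊤ := by
                refine ENNReal.add_lt_top.2 ⟨?_, ?_⟩
                · exact ENNReal.mul_lt_top h2p_top.lt_top
                    (ENNReal.mul_lt_top hmtop.lt_top hμ'mom)
                · refine ENNReal.mul_lt_top (ENNReal.mul_lt_top h2p_top.lt_top h2p_top.lt_top) ?_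
                  refine ENNReal.add_lt_top.2 ⟨?_, ?_⟩
                  · exact ENNReal.mul_lt_top hedist_top.lt_top hmmtop.lt_top
                  · exact ENNReal.mul_lt_top hmtop.lt_top hν'mom
        have hI0_lt : (⨅ π ∈ plans μ' ν', ∫⁻ z : X × X, edist z.1 z.2 ^ p ∂π) < ⊤ := by
          refine lt_of_le_of_lt (iInf₂_le π₀ hπ₀mem) ?_
          rw [hπ₀def, lintegral_smul_measure]
          exact ENNReal.mul_lt_top (ENNReal.inv_lt_top.2 (ENNReal.mul_pos h0 h0)) hprod_fin
        set I0 := ⨅ π ∈ plans μ' ν', ∫⁻ z : X × X, edist z.1 z.2 ^ p ∂π with hI0def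
        have hWval : WpPow p μ' ν' = m * I0 := by unfold WpPow; rw [hmdef, hI0def]
        set ee := ENNReal.ofReal (ε / b ^ p) with heedef
        have hee0 : ee ≠ 0 := by
          rw [heedef, Ne, ENNReal.ofReal_eq_zero, not_le]
          positivity
        have heetop : ee ≠ ⊤ := ENNReal.ofReal_ne_top
        have hη0 : ee / m ≠ 0 := by
          simp only [Ne, ENNReal.div_eq_zero_iff, not_or]
          exact ⟨hee0, hmtop⟩
        have hlt : I0 < I0 + ee / m := ENNReal.lt_add_right hI0_lt.ne hη0
        obtain ⟨π, hπmem, hπlt⟩ : ∃ π ∈ plans μ' ν',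
            ∫⁻ z : X × X, edist z.1 z.2 ^ p ∂π < I0 + ee / m := by
          have h := hlt
          rw [hI0def] at h
          rw [iInf_lt_iff] at h
          obtain ⟨π, hπ⟩ := h
          rw [iInf_lt_iff] at hπ
          obtain ⟨hπmem, hπlt⟩ := hπ
          exact ⟨π, hπmem, by rw [← hI0def] at hπlt; exact hπlt⟩
        haveI hπprob : IsProbabilityMeasure π := hπmem.1
        set γ : Measure (X × X) := m • π with hγdef
        haveI hγfin' : IsFiniteMeasure γ := by
          constructor
          rw [hγdef, Measure.smul_apply, smul_eq_mul, measure_univ, mul_one]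
          exact hmtop.lt_top
        have hmap_fst : γ.map Prod.fst = μ' := by
          ext A hA
          rw [Measure.map_apply measurable_fst hA, hγdef, Measure.smul_apply, smul_eq_mul,
            ← Set.prod_univ, hmdef]
          exact hπmem.2.1 A hA
        have hmap_snd : γ.map Prod.snd = ν' := by
          ext B hB
          rw [Measure.map_apply measurable_snd hB, hγdef, Measure.smul_apply, smul_eq_mul,
            ← Set.univ_prod, hmass]
          exact hπmem.2.2 B hB
        have hcost_eq : ∫⁻ z, c z ∂γ = C * (m * ∫⁻ z : X × X, edist z.1 z.2 ^ p ∂π) := by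
          have hfun : c = fun z : X × X => C * edist z.1 z.2 ^ p := funext hc_eq
          rw [hfun, lintegral_const_mul _ hmeas_d, hγdef, lintegral_smul_measure, smul_eq_mul]
        have hcost_lt : ∫⁻ z, c z ∂γ < ⊤ := by
          rw [hcost_eq]
          refine ENNReal.mul_lt_top hCne_top.lt_top (ENNReal.mul_lt_top hmtop.lt_top ?_)
          exact hπlt.trans_le (le_top)
        have hmem : EcostPlan a c μ₁ μ₂ γ ∈ T := ⟨γ, hγfin', hcost_lt, rfl⟩
        refine le_trans (csInf_le hTbdd hmem) ?_
        unfold EcostPlan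
        rw [hmap_fst, hmap_snd]
        have hfin1 : C * WpPow p μ' ν' ≠ ⊤ :=
          (ENNReal.mul_lt_top hCne_top.lt_top
            (by rw [hWval]; exact ENNReal.mul_lt_top hmtop.lt_top hI0_lt)).ne
        have hfin2 : C * ee ≠ ⊤ := (ENNReal.mul_lt_top hCne_top.lt_top heetop.lt_top).ne
        have hkey : (∫⁻ z, c z ∂γ).toReal ≤ b ^ p * (WpPow p μ' ν').toReal + ε := by
          have h1 : ∫⁻ z, c z ∂γ ≤ C * WpPow p μ' ν' + C * ee := by
            rw [hcost_eq, hWval]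
            calc C * (m * ∫⁻ z : X × X, edist z.1 z.2 ^ p ∂π)
                ≤ C * (m * (I0 + ee / m)) :=
                  mul_le_mul_right (mul_le_mul_right hπlt.le m) C
              _ = C * (m * I0) + C * (m * (ee / m)) := by rw [mul_add, mul_add]
              _ = C * (m * I0) + C * ee := by rw [ENNReal.mul_div_cancel h0 hmtop]
          calc (∫⁻ z, c z ∂γ).toReal ≤ (C * WpPow p μ' ν' + C * ee).toReal :=
                ENNReal.toReal_mono (ENNReal.add_ne_top.2 ⟨hfin1, hfin2⟩) h1
            _ = b ^ p * (WpPow p μ' ν').toReal + b ^ p * (ε / b ^ p) := by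
                rw [ENNReal.toReal_add hfin1 hfin2, ENNReal.toReal_mul, ENNReal.toReal_mul,
                  hCtoReal, heedef, ENNReal.toReal_ofReal (by positivity)]
            _ = b ^ p * (WpPow p μ' ν').toReal + ε := by
                rw [mul_comm (b ^ p) (ε / b ^ p), div_mul_cancel₀ ε hbp_pos.ne']
        linarith

/-- `W̃_p^{a,b}(μ₁, μ₂) = E_c(μ₁, μ₂)^{1/p}` for `c(x,y) = (b d(x,y))^p`. -/
theorem genW_eq_Ecost_rpow
    {X : Type*} [MetricSpace X] [PolishSpace X] [MeasurableSpace X] [BorelSpace X]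
    (a b p : ℝ) (ha : 0 < a) (hb : 0 < b) (hp : 1 ≤ p)
    (μ₁ μ₂ : Measure X) [IsFiniteMeasure μ₁] [IsFiniteMeasure μ₂] :
    genW a b p μ₁ μ₂ =
      Ecost a (fun z : X × X => ENNReal.ofReal (b * dist z.1 z.2) ^ p) μ₁ μ₂ ^ (1 / p) := by
  rw [genW, genWPow_eq_Ecost a b p ha hb hp μ₁ μ₂]
end
end

section
/- Let X = ℝ, a = b = 1, λ₁ = λ₂ = 1/2, and for x ≥ 0 let μ₁ = δ_x and μ₂ = 3δ_x. Then the set of generalized Wasserstein barycenters of (μ₁, μ₂) with weights (λ₁, λ₂) is exactly { q·δ_x : q ∈ [1,3] }; in particular the minimum value of (1/2)·W̃₂^{1,1}(δ_x, μ)² + (1/2)·W̃₂^{1,1}(3δ_x, μ)² over measures μ supported in {x} equals 1, and it is attained precisely when μ = q·δ_x with q ∈ [1,3]. -/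
open MeasureTheory Set Filter Topology
open scoped ENNReal

noncomputable section

variable {X : Type*} [MetricSpace X] [MeasurableSpace X]

/-- The support of a Borel measure: points all of whose open neighbourhoods have
positive measure. -/
def msupport (μ : Measure X) : Set X :=
  {x : X | ∀ U : Set X, IsOpen U → x ∈ U → 0 < μ U}

lemma smul_dirac_finite (c : ℝ≥0∞) (hc : c ≠ ⊤) (x : ℝ) :
    IsFiniteMeasure (c • Measure.dirac x) := by
  constructor
  simp [Measure.smul_apply, lt_top_iff_ne_top, hc]

lemma sub_dirac_ge (m : ℝ≥0∞) (x : ℝ) (ν : Measure ℝ) :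
    m - ν univ ≤ (m • Measure.dirac x - ν) univ := by
  have hτ : (m - ν {x}) • Measure.dirac x ≤ m • Measure.dirac x - ν := by
    rw [Measure.sub_def]
    refine le_sInf fun d hd => ?_
    rw [Set.mem_setOf_eq] at hd
    refine Measure.le_iff'.2 fun s => ?_
    by_cases hxs : x ∈ s
    · have h1 : m ≤ d {x} + ν {x} := by
        have := Measure.le_iff'.1 hd {x}
        simpa [Measure.smul_apply, Measure.dirac_apply] using this
      have h2 : m - ν {x} ≤ d {x} := tsub_le_iff_right.2 h1
      calc ((m - ν {x}) • Measure.dirac x) s = m - ν {x} := by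
            simp [Measure.smul_apply, Measure.dirac_apply, indicator_apply, hxs]
        _ ≤ d {x} := h2
        _ ≤ d s := measure_mono (singleton_subset_iff.2 hxs)
    · simp [Measure.smul_apply, Measure.dirac_apply, indicator_apply, hxs]
  have := Measure.le_iff'.1 hτ univ
  calc m - ν univ ≤ m - ν {x} := tsub_le_tsub_left (measure_mono (subset_univ _)) m
    _ = ((m - ν {x}) • Measure.dirac x) univ := by simp [Measure.smul_apply]
    _ ≤ _ := this

lemma dirac_sub_ge (m : ℝ≥0∞) (x : ℝ) (ν : Measure ℝ) :
    ν univ - m ≤ (ν - m • Measure.dirac x) univ := by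
  set τ : Measure ℝ := ν.restrict {x}ᶜ + (ν {x} - m) • Measure.dirac x with hτdef
  have hτ : τ ≤ ν - m • Measure.dirac x := by
    rw [Measure.sub_def]
    refine le_sInf fun d hd => ?_
    rw [Set.mem_setOf_eq] at hd
    refine Measure.le_iff.2 fun s hs => ?_
    have hsplit : d (s ∩ {x}) + d (s \ {x}) = d s := measure_inter_add_diff s (measurableSet_singleton x)
    have h1 : ν (s \ {x}) ≤ d (s \ {x}) := by
      have := Measure.le_iff'.1 hd (s \ {x})
      have hx0 : (Measure.dirac x) (s \ {x}) = 0 := by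
        simp [Measure.dirac_apply, indicator_apply]
      simpa [Measure.smul_apply, hx0] using this
    have hτs : τ s = ν (s \ {x}) + (ν {x} - m) * (Measure.dirac x) s := by
      rw [hτdef]
      simp [Measure.restrict_apply hs, diff_eq, Measure.smul_apply, smul_eq_mul]
    by_cases hxs : x ∈ s
    · have h2 : ν {x} - m ≤ d {x} := by
        have h := Measure.le_iff'.1 hd {x}
        simp only [Measure.coe_add, Pi.add_apply, Measure.smul_apply, smul_eq_mul,
          Measure.dirac_apply, indicator_apply, mem_singleton_iff, if_pos rfl, if_true, Pi.one_apply,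
          mul_one] at h
        exact tsub_le_iff_right.2 h
      have hsx : s ∩ {x} = {x} := by
        ext y; simp only [mem_inter_iff, mem_singleton_iff]
        exact ⟨fun h => h.2, fun h => ⟨h ▸ hxs, h⟩⟩
      rw [hτs, Measure.dirac_apply]
      rw [Set.indicator_of_mem hxs]
      simp only [Pi.one_apply, mul_one]
      calc ν (s \ {x}) + (ν {x} - m) ≤ d (s \ {x}) + d {x} := add_le_add h1 h2
        _ = d (s ∩ {x}) + d (s \ {x}) := by rw [hsx, add_comm]
        _ = d s := hsplit
    · rw [hτs, Measure.dirac_apply]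
      rw [Set.indicator_of_notMem hxs]
      simp only [mul_zero, add_zero]
      calc ν (s \ {x}) ≤ d (s \ {x}) := h1
        _ ≤ d s := measure_mono diff_subset
  have hle := Measure.le_iff'.1 hτ univ
  have hτu : ν {x}ᶜ + (ν {x} - m) = τ univ := by
    rw [hτdef]
    simp [Measure.restrict_apply MeasurableSet.univ, Measure.smul_apply, Measure.dirac_apply]
  calc ν univ - m ≤ (ν {x}ᶜ + ν {x}) - m := by
        refine tsub_le_tsub_right ?_ m
        rw [add_comm, measure_add_measure_compl (measurableSet_singleton x)]
    _ ≤ ν {x}ᶜ + (ν {x} - m) := add_tsub_le_assoc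
    _ = τ univ := hτu
    _ ≤ _ := hle

lemma tvDist_dirac_ge (m : ℝ≥0∞) (hm : m ≠ ⊤) (x : ℝ) (ν : Measure ℝ) [IsFiniteMeasure ν] :
    |m.toReal - (ν univ).toReal| ≤ tvDist (m • Measure.dirac x) ν := by
  have hμu : (m • Measure.dirac x) univ = m := by simp [Measure.smul_apply]
  have h1 : m - ν univ ≤ (m • Measure.dirac x - ν) univ := sub_dirac_ge m x ν
  have h2 : ν univ - m ≤ (ν - m • Measure.dirac x) univ := dirac_sub_ge m x ν
  have hfin1 : (m • Measure.dirac x - ν) univ ≠ ⊤ := by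
    have := Measure.le_iff'.1 (Measure.sub_le (μ := m • Measure.dirac x) (ν := ν)) univ
    exact ne_top_of_le_ne_top (by simp [hμu, hm]) this
  have hfin2 : (ν - m • Measure.dirac x) univ ≠ ⊤ := by
    have := Measure.le_iff'.1 (Measure.sub_le (μ := ν) (ν := m • Measure.dirac x)) univ
    exact ne_top_of_le_ne_top (measure_ne_top ν univ) this
  have key : (m - ν univ) + (ν univ - m) ≤
      (m • Measure.dirac x - ν) univ + (ν - m • Measure.dirac x) univ := add_le_add h1 h2
  have hν : ν univ ≠ ⊤ := measure_ne_top ν univ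
  have habs : ((m - ν univ) + (ν univ - m)).toReal = |m.toReal - (ν univ).toReal| := by
    rcases le_total m (ν univ) with h | h
    · rw [tsub_eq_zero_of_le h, zero_add, ENNReal.toReal_sub_of_le h hν,
        abs_of_nonpos (by linarith [ENNReal.toReal_mono hν h] : m.toReal - (ν univ).toReal ≤ 0)]
      ring
    · rw [tsub_eq_zero_of_le h, add_zero, ENNReal.toReal_sub_of_le h hm,
        abs_of_nonneg (by linarith [ENNReal.toReal_mono hm h] : (0:ℝ) ≤ m.toReal - (ν univ).toReal)]
  rw [← habs]
  exact ENNReal.toReal_mono (by simp [ENNReal.add_ne_top, hfin1, hfin2]) key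

lemma tvDist_smul_dirac_le (m c : ℝ≥0∞) (h : m ≤ c) (hc : c ≠ ⊤) (x : ℝ) :
    tvDist (c • Measure.dirac x) (m • Measure.dirac x) = (c - m).toReal := by
  have hm : m ≠ ⊤ := ne_top_of_le_ne_top hc h
  haveI := smul_dirac_finite m hm x
  have hle : m • Measure.dirac x ≤ c • Measure.dirac x := by
    refine Measure.le_iff'.2 fun s => ?_
    simp only [Measure.smul_apply, smul_eq_mul]
    exact mul_le_mul_left h _
  rw [tvDist, Measure.sub_apply MeasurableSet.univ hle, Measure.sub_eq_zero_of_le hle]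
  simp [Measure.smul_apply]

lemma tvDist_comm (μ ν : Measure X) : tvDist μ ν = tvDist ν μ := by
  rw [tvDist, tvDist, add_comm]

lemma tvDist_self (μ : Measure X) : tvDist μ μ = 0 := by
  simp [tvDist, Measure.sub_self]

lemma WpPow_smul_dirac_self (s : ℝ≥0∞) (x : ℝ) :
    WpPow 2 (s • Measure.dirac x) (s • Measure.dirac x) = 0 := by
  have hmem : Measure.dirac (x, x) ∈ plans (s • Measure.dirac x) (s • Measure.dirac x) := by
    refine ⟨Measure.dirac.isProbabilityMeasure, fun A hA => ?_, fun B hB => ?_⟩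
    · rw [Measure.dirac_apply']
      · simp only [Measure.smul_apply, smul_eq_mul, Measure.dirac_apply,
          measure_univ, indicator_apply, mem_prod, mem_univ, and_true, mem_singleton_iff]
        by_cases hxA : x ∈ A <;> simp [hxA, indicator_apply]
      · exact hA.prod MeasurableSet.univ
    · rw [Measure.dirac_apply']
      · simp only [Measure.smul_apply, smul_eq_mul, Measure.dirac_apply,
          measure_univ, indicator_apply, mem_prod, mem_univ, true_and, mem_singleton_iff]
        by_cases hxB : x ∈ B <;> simp [hxB, indicator_apply]
      · exact MeasurableSet.univ.prod hB
  have hint : ∫⁻ z : ℝ × ℝ, edist z.1 z.2 ^ (2:ℝ) ∂(Measure.dirac (x, x)) = 0 := by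
    rw [lintegral_dirac]
    simp [ENNReal.zero_rpow_of_pos]
  have hinf : ⨅ π ∈ plans (s • Measure.dirac x) (s • Measure.dirac x),
      ∫⁻ z : ℝ × ℝ, edist z.1 z.2 ^ (2:ℝ) ∂π = 0 := by
    refine le_antisymm ?_ zero_le
    exact le_trans (iInf₂_le _ hmem) (le_of_eq hint)
  rw [WpPow, hinf, mul_zero]

lemma memMp_smul_dirac (m : ℝ≥0∞) (hm : m ≠ ⊤) (x : ℝ) :
    MemMp 2 (m • Measure.dirac x) := by
  refine ⟨smul_dirac_finite m hm x, x, ?_⟩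
  rw [lintegral_smul_measure, lintegral_dirac]
  simp [ENNReal.zero_rpow_of_pos]

lemma genWPow_smul_dirac (m c : ℝ≥0∞) (hm : m ≠ ⊤) (hc : c ≠ ⊤) (x : ℝ) :
    genWPow 1 1 2 (m • Measure.dirac x) (c • Measure.dirac x) = |m.toReal - c.toReal| := by
  classical
  have hb1 : (1:ℝ) ^ (2:ℝ) = 1 := Real.one_rpow 2
  set μ := m • Measure.dirac x with hμ
  set ν := c • Measure.dirac x with hν
  set S : Set ℝ := {r : ℝ | ∃ μ' ν' : Measure ℝ, MemMp 2 μ' ∧ MemMp 2 ν' ∧ μ' univ = ν' univ ∧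
      r = 1 * tvDist μ μ' + 1 * tvDist ν ν' + (1:ℝ) ^ (2:ℝ) * (WpPow 2 μ' ν').toReal} with hS
  have hgen : genWPow 1 1 2 μ ν = sInf S := rfl
  have hbdd : BddBelow S := by
    refine ⟨0, fun r hr => ?_⟩
    obtain ⟨μ', ν', _, _, _, rfl⟩ := hr
    have a1 := tvDist_nonneg μ μ'
    have a2 := tvDist_nonneg ν ν'
    have a3 : (0:ℝ) ≤ (WpPow 2 μ' ν').toReal := ENNReal.toReal_nonneg
    rw [hb1]
    linarith
  have hlow : ∀ r ∈ S, |m.toReal - c.toReal| ≤ r := by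
    intro r hr
    obtain ⟨μ', ν', hμ', hν', hmass, rfl⟩ := hr
    haveI := hμ'.1
    haveI := hν'.1
    have t1 := tvDist_dirac_ge m hm x μ'
    have t2 := tvDist_dirac_ge c hc x ν'
    have a3 : (0:ℝ) ≤ (WpPow 2 μ' ν').toReal := ENNReal.toReal_nonneg
    have habs : |m.toReal - c.toReal| ≤
        |m.toReal - (μ' univ).toReal| + |c.toReal - (ν' univ).toReal| := by
      rw [hmass]
      calc |m.toReal - c.toReal| ≤ |m.toReal - (ν' univ).toReal| +
            |(ν' univ).toReal - c.toReal| := abs_sub_le _ _ _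
        _ = |m.toReal - (ν' univ).toReal| + |c.toReal - (ν' univ).toReal| := by
            rw [abs_sub_comm ((ν' univ).toReal) c.toReal]
    rw [hb1]
    linarith
  rcases le_total m c with h | h
  · have hm' : m ≠ ⊤ := hm
    have hmem : c.toReal - m.toReal ∈ S := by
      refine ⟨m • Measure.dirac x, m • Measure.dirac x, memMp_smul_dirac m hm' x,
        memMp_smul_dirac m hm' x, rfl, ?_⟩
      rw [hμ, hν, tvDist_self, tvDist_smul_dirac_le m c h hc x, WpPow_smul_dirac_self,
        ENNReal.toReal_sub_of_le h hc, hb1]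
      simp
    have habs : |m.toReal - c.toReal| = c.toReal - m.toReal := by
      rw [abs_sub_comm]
      exact abs_of_nonneg (by linarith [ENNReal.toReal_mono hc h])
    rw [hgen, habs]
    exact le_antisymm (csInf_le hbdd hmem) (le_csInf ⟨_, hmem⟩ (habs ▸ hlow))
  · have hc' : c ≠ ⊤ := hc
    have hmem : m.toReal - c.toReal ∈ S := by
      refine ⟨c • Measure.dirac x, c • Measure.dirac x, memMp_smul_dirac c hc' x,
        memMp_smul_dirac c hc' x, rfl, ?_⟩
      rw [hμ, hν, tvDist_self (c • Measure.dirac x), tvDist_smul_dirac_le c m h hm x,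
        WpPow_smul_dirac_self, ENNReal.toReal_sub_of_le h hm, hb1]
      simp
    have habs : |m.toReal - c.toReal| = m.toReal - c.toReal :=
      abs_of_nonneg (by linarith [ENNReal.toReal_mono hm h])
    rw [hgen, habs]
    exact le_antisymm (csInf_le hbdd hmem) (le_csInf ⟨_, hmem⟩ (habs ▸ hlow))

lemma genW_sq_smul_dirac (m c : ℝ≥0∞) (hm : m ≠ ⊤) (hc : c ≠ ⊤) (x : ℝ) :
    genW 1 1 2 (m • Measure.dirac x) (c • Measure.dirac x) ^ 2 = |m.toReal - c.toReal| := by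
  rw [genW, genWPow_smul_dirac m c hm hc x,
    ← Real.rpow_natCast (|m.toReal - c.toReal| ^ ((1:ℝ)/2)) 2,
    ← Real.rpow_mul (abs_nonneg _)]
  norm_num

lemma msupport_smul_dirac_subset (c : ℝ≥0∞) (x : ℝ) :
    msupport (c • Measure.dirac x) ⊆ {x} := by
  intro y hy
  by_contra hne
  have hyc : y ∈ ({x}ᶜ : Set ℝ) := hne
  have h := hy {x}ᶜ isOpen_compl_singleton hyc
  rw [Measure.smul_apply, Measure.dirac_apply, Set.indicator_of_notMem (by simp)] at h
  simp at h

lemma msupport_smul_dirac (c : ℝ≥0∞) (hc : c ≠ 0) (x : ℝ) :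
    msupport (c • Measure.dirac x) = {x} := by
  refine Subset.antisymm (msupport_smul_dirac_subset c x) ?_
  rw [singleton_subset_iff]
  intro U hU hxU
  rw [Measure.smul_apply, Measure.dirac_apply, Set.indicator_of_mem hxU]
  simpa using pos_iff_ne_zero.2 hc

lemma msupport_dirac (x : ℝ) : msupport (Measure.dirac x) = {x} := by
  have := msupport_smul_dirac 1 one_ne_zero x
  rwa [one_smul] at this

lemma eq_smul_dirac_of_msupport_subset (μ : Measure ℝ) (x : ℝ) (h : msupport μ ⊆ {x}) :
    μ = μ univ • Measure.dirac x := by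
  have hnull : μ {x}ᶜ = 0 := by
    refine measure_null_of_locally_null _ fun y hy => ?_
    have hyx : y ∉ msupport μ := fun hmem => hy (h hmem)
    rw [msupport, mem_setOf_eq] at hyx
    push_neg at hyx
    obtain ⟨U, hUopen, hyU, hU0⟩ := hyx
    exact ⟨U, mem_nhdsWithin_of_mem_nhds (hUopen.mem_nhds hyU),
      le_antisymm hU0 zero_le⟩
  have hμx : μ univ = μ {x} := by
    have h2 := measure_add_measure_compl (μ := μ) (measurableSet_singleton x)
    rw [hnull, add_zero] at h2
    exact h2.symm
  ext s hs
  rw [Measure.smul_apply, Measure.dirac_apply, smul_eq_mul]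
  by_cases hxs : x ∈ s
  · rw [Set.indicator_of_mem hxs, Pi.one_apply, mul_one, hμx]
    have h1 : μ (s \ {x}) = 0 :=
      measure_mono_null (fun y hy => fun h' => hy.2 h') hnull
    have h2 : s ∩ {x} = {x} := by
      ext y
      simp only [mem_inter_iff, mem_singleton_iff]
      exact ⟨fun h' => h'.2, fun h' => ⟨h' ▸ hxs, h'⟩⟩
    rw [← measure_inter_add_diff s (measurableSet_singleton x), h1, add_zero, h2]
  · rw [Set.indicator_of_notMem hxs, mul_zero]
    exact measure_mono_null (fun y hy => fun h' : y ∈ ({x} : Set ℝ) => hxs (h' ▸ hy)) hnull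

/-- `ν` is a generalized Wasserstein barycenter of `(μs i)` with weights `(l i)`:
it is a finite measure supported in `K = ⋃ᵢ supp (μs i)` minimizing
`∑ᵢ l i • W̃₂^{a,b}(μs i, ·)²` among all such measures. -/
def IsBarycenter (a b : ℝ) {k : ℕ} (μs : Fin k → Measure X) (l : Fin k → ℝ)
    (ν : Measure X) : Prop :=
  IsFiniteMeasure ν ∧ msupport ν ⊆ ⋃ i, msupport (μs i) ∧
    ∀ ν' : Measure X, IsFiniteMeasure ν' → msupport ν' ⊆ ⋃ i, msupport (μs i) →
      ∑ i, l i * genW a b 2 (μs i) ν ^ 2 ≤ ∑ i, l i * genW a b 2 (μs i) ν' ^ 2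

/-- for `μ₁ = δ_x`, `μ₂ = 3δ_x`, `a = b = 1`, `λ₁ = λ₂ = 1/2`, the set of
generalized Wasserstein barycenters is `{q δ_x : q ∈ [1,3]}`; the minimum value of the
barycenter functional over measures supported in `{x}` is `1`, attained exactly at `q δ_x`
with `q ∈ [1,3]`. -/
theorem barycenter_dirac_example (x : ℝ) (hx : 0 ≤ x) :
    (∀ μ : Measure ℝ, IsFiniteMeasure μ → msupport μ ⊆ ({x} : Set ℝ) →
      1 ≤ (1 / 2 : ℝ) * genW 1 1 2 (Measure.dirac x) μ ^ 2 +
          (1 / 2 : ℝ) * genW 1 1 2 ((3 : ℝ≥0∞) • Measure.dirac x) μ ^ 2) ∧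
    (∀ μ : Measure ℝ, IsFiniteMeasure μ → msupport μ ⊆ ({x} : Set ℝ) →
      ((1 / 2 : ℝ) * genW 1 1 2 (Measure.dirac x) μ ^ 2 +
          (1 / 2 : ℝ) * genW 1 1 2 ((3 : ℝ≥0∞) • Measure.dirac x) μ ^ 2 = 1 ↔
        ∃ q : ℝ, 1 ≤ q ∧ q ≤ 3 ∧ μ = ENNReal.ofReal q • Measure.dirac x)) ∧
    {μ : Measure ℝ |
        IsBarycenter 1 1 ![Measure.dirac x, (3 : ℝ≥0∞) • Measure.dirac x] ![1 / 2, 1 / 2] μ} =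
      {μ : Measure ℝ | ∃ q : ℝ, 1 ≤ q ∧ q ≤ 3 ∧ μ = ENNReal.ofReal q • Measure.dirac x} := by
  have key : ∀ C : ℝ≥0∞, C ≠ ⊤ →
      (1 / 2 : ℝ) * genW 1 1 2 (Measure.dirac x) (C • Measure.dirac x) ^ 2 +
        (1 / 2 : ℝ) * genW 1 1 2 ((3 : ℝ≥0∞) • Measure.dirac x) (C • Measure.dirac x) ^ 2 =
      1/2 * |1 - C.toReal| + 1/2 * |3 - C.toReal| := by
    intro C hC
    have h1 := genW_sq_smul_dirac 1 C ENNReal.one_ne_top hC x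
    rw [one_smul, ENNReal.toReal_one] at h1
    have h3 := genW_sq_smul_dirac 3 C (by simp) hC x
    rw [show ((3:ℝ≥0∞)).toReal = 3 from by simp] at h3
    rw [h1, h3]
  have hE1 : ∀ t : ℝ, 1 ≤ 1/2 * |1 - t| + 1/2 * |3 - t| := by
    intro t
    have a := le_abs_self (1 - t)
    have b := neg_abs_le (1 - t)
    have c := le_abs_self (3 - t)
    have d := neg_abs_le (3 - t)
    linarith
  have hE2 : ∀ t : ℝ, (1/2 * |1 - t| + 1/2 * |3 - t| = 1 ↔ 1 ≤ t ∧ t ≤ 3) := by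
    intro t
    constructor
    · intro h
      rcases le_total t 1 with h1 | h1
      · rw [abs_of_nonneg (by linarith), abs_of_nonneg (by linarith)] at h
        constructor <;> linarith
      · rcases le_total t 3 with h3 | h3
        · exact ⟨h1, h3⟩
        · rw [abs_of_nonpos (by linarith), abs_of_nonpos (by linarith)] at h
          constructor <;> linarith
    · rintro ⟨h1, h3⟩
      rw [abs_of_nonpos (by linarith), abs_of_nonneg (by linarith)]
      ring
  have part1 : ∀ μ : Measure ℝ, IsFiniteMeasure μ → msupport μ ⊆ ({x} : Set ℝ) →
      1 ≤ (1 / 2 : ℝ) * genW 1 1 2 (Measure.dirac x) μ ^ 2 +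
          (1 / 2 : ℝ) * genW 1 1 2 ((3 : ℝ≥0∞) • Measure.dirac x) μ ^ 2 := by
    intro μ hfin hsupp
    have hμ := eq_smul_dirac_of_msupport_subset μ x hsupp
    have hC : μ univ ≠ ⊤ := measure_ne_top μ univ
    rw [hμ, key (μ univ) hC]
    exact hE1 _
  have part2 : ∀ μ : Measure ℝ, IsFiniteMeasure μ → msupport μ ⊆ ({x} : Set ℝ) →
      ((1 / 2 : ℝ) * genW 1 1 2 (Measure.dirac x) μ ^ 2 +
          (1 / 2 : ℝ) * genW 1 1 2 ((3 : ℝ≥0∞) • Measure.dirac x) μ ^ 2 = 1 ↔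
        ∃ q : ℝ, 1 ≤ q ∧ q ≤ 3 ∧ μ = ENNReal.ofReal q • Measure.dirac x) := by
    intro μ hfin hsupp
    have hμ := eq_smul_dirac_of_msupport_subset μ x hsupp
    have hC : μ univ ≠ ⊤ := measure_ne_top μ univ
    rw [hμ, key (μ univ) hC, hE2 (μ univ).toReal]
    constructor
    · rintro ⟨h1, h3⟩
      exact ⟨(μ univ).toReal, h1, h3, by rw [ENNReal.ofReal_toReal hC]⟩
    · rintro ⟨q, hq1, hq3, hμq⟩
      have hq : μ univ = ENNReal.ofReal q := by
        have h' := congrArg (fun m : Measure ℝ => m univ) hμq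
        simpa [Measure.smul_apply] using h'
      rw [hq, ENNReal.toReal_ofReal (by linarith : (0:ℝ) ≤ q)]
      exact ⟨hq1, hq3⟩
  refine ⟨part1, part2, ?_⟩
  have hK : (⋃ i, msupport (![Measure.dirac x, (3:ℝ≥0∞) • Measure.dirac x] i)) = ({x} : Set ℝ) := by
    apply Subset.antisymm
    · refine iUnion_subset fun i => ?_
      fin_cases i
      · simp [msupport_dirac]
      · simp [msupport_smul_dirac 3 (by norm_num) x]
    · intro y hy
      exact mem_iUnion.2 ⟨0, by simpa [msupport_dirac] using hy⟩
  have hsum : ∀ ν : Measure ℝ,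
      (∑ i, ![(1:ℝ) / 2, 1 / 2] i *
          genW 1 1 2 (![Measure.dirac x, (3:ℝ≥0∞) • Measure.dirac x] i) ν ^ 2) =
      (1 / 2 : ℝ) * genW 1 1 2 (Measure.dirac x) ν ^ 2 +
        (1 / 2 : ℝ) * genW 1 1 2 ((3:ℝ≥0∞) • Measure.dirac x) ν ^ 2 := by
    intro ν
    simp [Fin.sum_univ_two]
  have hd1 : (1 / 2 : ℝ) * genW 1 1 2 (Measure.dirac x) (Measure.dirac x) ^ 2 +
      (1 / 2 : ℝ) * genW 1 1 2 ((3:ℝ≥0∞) • Measure.dirac x) (Measure.dirac x) ^ 2 = 1 := by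
    have h := key 1 ENNReal.one_ne_top
    rw [one_smul] at h
    rw [h, ENNReal.toReal_one]
    norm_num
  ext μ
  simp only [mem_setOf_eq]
  constructor
  · rintro ⟨hfin, hsupp, hmin⟩
    rw [hK] at hsupp
    have hmin' := hmin (Measure.dirac x) inferInstance (by rw [hK, msupport_dirac])
    rw [hsum, hsum, hd1] at hmin'
    exact (part2 μ hfin hsupp).1 (le_antisymm hmin' (part1 μ hfin hsupp))
  · rintro ⟨q, hq1, hq3, rfl⟩
    have hq0 : (0:ℝ) ≤ q := by linarith
    have hqt : ENNReal.ofReal q ≠ ⊤ := ENNReal.ofReal_ne_top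
    refine ⟨smul_dirac_finite _ hqt x, by rw [hK]; exact msupport_smul_dirac_subset _ x, ?_⟩
    intro ν' hfin' hsupp'
    rw [hK] at hsupp'
    rw [hsum, hsum]
    have hval1 : (1 / 2 : ℝ) * genW 1 1 2 (Measure.dirac x) (ENNReal.ofReal q • Measure.dirac x) ^ 2 +
        (1 / 2 : ℝ) * genW 1 1 2 ((3:ℝ≥0∞) • Measure.dirac x) (ENNReal.ofReal q • Measure.dirac x) ^ 2 = 1 := by
      rw [key (ENNReal.ofReal q) hqt, ENNReal.toReal_ofReal hq0]
      exact (hE2 q).2 ⟨hq1, hq3⟩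
    rw [hval1]
    exact part1 ν' hfin' hsupp'
end
end

section
/- Let (X,d) be a Polish metric space, a,b>0, k ≥ 2, μ₁,…,μ_k ∈ M(X) compactly supported, λ₁,…,λ_k > 0 with Σᵢ λᵢ = 1, and K := ⋃ᵢ supp(μᵢ). Then the dual problem (B*) admits a maximizer: there exist f₁,…,f_k with fᵢ ∈ F_{λᵢ} and Σᵢ fᵢ = 0 such that Σᵢ ∫_K S̄_{λᵢ}fᵢ dμᵢ = sup{ Σᵢ ∫_K S̄_{λᵢ}gᵢ dμᵢ : gᵢ ∈ F_{λᵢ}, Σᵢ gᵢ = 0 }. -/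
open MeasureTheory Set Filter Topology Metric
open scoped ENNReal NNReal

noncomputable section

section Aux

variable {Z : Type*} [MetricSpace Z] [CompactSpace Z] [Nonempty Z]

/-- Abstract version of the transform `S`. -/
def STrans (b lam : ℝ) (f : Z → ℝ) (x : Z) : ℝ :=
  ⨅ y : Z, (lam * b ^ 2 * dist x y ^ 2 - f y)

variable {b lam : ℝ}

lemma STrans_bddBelow (hlb : 0 ≤ lam * b ^ 2) (f : C(Z, ℝ)) (x : Z) :
    BddBelow (Set.range fun y : Z => lam * b ^ 2 * dist x y ^ 2 - f y) := by
  refine ⟨-‖f‖, ?_⟩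
  rintro r ⟨y, rfl⟩
  have h1 : ‖f y‖ ≤ ‖f‖ := f.norm_coe_le_norm y
  rw [Real.norm_eq_abs] at h1
  have h2 : 0 ≤ lam * b ^ 2 * dist x y ^ 2 := mul_nonneg hlb (by positivity)
  have h3 := abs_le.mp h1
  simp only [mem_setOf_eq]
  linarith [h3.2]

lemma STrans_le (hlb : 0 ≤ lam * b ^ 2) (f : C(Z, ℝ)) (x y : Z) :
    STrans b lam (⇑f) x ≤ lam * b ^ 2 * dist x y ^ 2 - f y :=
  ciInf_le (STrans_bddBelow hlb f x) y

lemma le_STrans (f : C(Z, ℝ)) {x : Z} {m : ℝ}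
    (h : ∀ y, m ≤ lam * b ^ 2 * dist x y ^ 2 - f y) : m ≤ STrans b lam (⇑f) x :=
  le_ciInf h

lemma STrans_le_neg (hlb : 0 ≤ lam * b ^ 2) (f : C(Z, ℝ)) (x : Z) :
    STrans b lam (⇑f) x ≤ -f x := by
  have := STrans_le hlb f x x
  simpa [dist_self] using this

lemma STrans_anti (hlb : 0 ≤ lam * b ^ 2) {f g : C(Z, ℝ)} (h : ∀ x, f x ≤ g x) (x : Z) :
    STrans b lam (⇑g) x ≤ STrans b lam (⇑f) x :=
  le_ciInf fun y => (STrans_le hlb g x y).trans (by linarith [h y])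

lemma STrans_lipschitz (hlb : 0 ≤ lam * b ^ 2) {D : ℝ} (hD : ∀ x y : Z, dist x y ≤ D)
    (f : C(Z, ℝ)) :
    LipschitzWith (Real.toNNReal (2 * (lam * b ^ 2) * D)) (STrans b lam (⇑f)) := by
  have hD0 : 0 ≤ D := by
    obtain ⟨x0⟩ := ‹Nonempty Z›
    exact le_trans dist_nonneg (hD x0 x0)
  have key : ∀ x x' : Z,
      STrans b lam (⇑f) x - STrans b lam (⇑f) x' ≤ 2 * (lam * b ^ 2) * D * dist x x' := by
    intro x x'
    have h : STrans b lam (⇑f) x - 2 * (lam * b ^ 2) * D * dist x x' ≤ STrans b lam (⇑f) x' := by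
      refine le_ciInf fun y => ?_
      have h1 := STrans_le hlb f x y
      have hxy := hD x y
      have hx'y := hD x' y
      have habs : dist x y - dist x' y ≤ dist x x' := by
        have := abs_dist_sub_le x x' y
        linarith [(abs_le.mp this).2]
      have hprod : (dist x y - dist x' y) * (dist x y + dist x' y) ≤ dist x x' * (2 * D) := by
        rcases le_or_gt (dist x y) (dist x' y) with hc | hc
        · have h1' : (dist x y - dist x' y) * (dist x y + dist x' y) ≤ 0 :=
            mul_nonpos_of_nonpos_of_nonneg (by linarith) (by positivity)
          have : (0:ℝ) ≤ dist x x' * (2 * D) := by positivity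
          linarith
        · exact mul_le_mul habs (by linarith) (by positivity) dist_nonneg
      have hmul := mul_le_mul_of_nonneg_left hprod hlb
      nlinarith [hmul]
    linarith
  refine LipschitzWith.of_dist_le_mul fun x x' => ?_
  have hc : (Real.toNNReal (2 * (lam * b ^ 2) * D) : ℝ) = 2 * (lam * b ^ 2) * D :=
    Real.coe_toNNReal _ (by positivity)
  rw [Real.dist_eq, abs_sub_le_iff, hc]
  constructor
  · exact key x x'
  · have := key x' x
    rwa [dist_comm x' x] at this

/-- Bundled version of the transform. -/
def STransCM (b lam : ℝ) {D : ℝ} (hlb : 0 ≤ lam * b ^ 2) (hD : ∀ x y : Z, dist x y ≤ D)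
    (f : C(Z, ℝ)) : C(Z, ℝ) :=
  ⟨STrans b lam (⇑f), (STrans_lipschitz hlb hD f).continuous⟩

@[simp] lemma STransCM_apply {D : ℝ} (hlb : 0 ≤ lam * b ^ 2) (hD : ∀ x y : Z, dist x y ≤ D)
    (f : C(Z, ℝ)) (x : Z) : STransCM b lam hlb hD f x = STrans b lam (⇑f) x := rfl

lemma le_STrans_STrans {D : ℝ} (hlb : 0 ≤ lam * b ^ 2) (hD : ∀ x y : Z, dist x y ≤ D)
    (f : C(Z, ℝ)) (x : Z) :
    f x ≤ STrans b lam (⇑(STransCM b lam hlb hD f)) x := by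
  refine le_ciInf fun y => ?_
  have h := STrans_le hlb f y x
  rw [dist_comm y x] at h
  simp only [STransCM_apply]
  linarith

lemma STrans_triple {D : ℝ} (hlb : 0 ≤ lam * b ^ 2) (hD : ∀ x y : Z, dist x y ≤ D)
    (f : C(Z, ℝ)) (x : Z) :
    STrans b lam (⇑(STransCM b lam hlb hD (STransCM b lam hlb hD f))) x
      = STrans b lam (⇑f) x := by
  refine le_antisymm ?_ ?_
  · exact STrans_anti hlb (fun y => le_STrans_STrans hlb hD f y) x
  · exact le_STrans_STrans hlb hD (STransCM b lam hlb hD f) x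

lemma STrans_dist_le (hlb : 0 ≤ lam * b ^ 2) (f g : C(Z, ℝ)) (x : Z) :
    |STrans b lam (⇑f) x - STrans b lam (⇑g) x| ≤ dist f g := by
  have h : ∀ u v : C(Z, ℝ), STrans b lam (⇑u) x - dist u v ≤ STrans b lam (⇑v) x := by
    intro u v
    refine le_ciInf fun y => ?_
    have h1 := STrans_le hlb u x y
    have h2 : dist (u y) (v y) ≤ dist u v := ContinuousMap.dist_apply_le_dist y
    rw [Real.dist_eq] at h2
    have h3 := abs_le.mp h2
    linarith [h3.1]
  rw [abs_sub_le_iff]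
  constructor
  · linarith [h f g]
  · have := h g f
    rw [dist_comm g f] at this
    linarith

lemma abs_min_sub_min_le {p q c : ℝ} : |min p c - min q c| ≤ |p - q| := by
  rw [abs_sub_le_iff]
  constructor
  · rcases le_total q c with h | h
    · have : min p c ≤ p := min_le_left _ _
      have h2 : min q c = q := min_eq_left h
      have := le_abs_self (p - q)
      rw [h2]; linarith
    · have : min p c ≤ c := min_le_right _ _
      have h2 : min q c = c := min_eq_right h
      have := abs_nonneg (p - q)
      rw [h2]; linarith
  · rcases le_total p c with h | h
    · have : min q c ≤ q := min_le_left _ _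
      have h2 : min p c = p := min_eq_left h
      have := neg_abs_le (p - q)
      rw [h2]; linarith
    · have : min q c ≤ c := min_le_right _ _
      have h2 : min p c = c := min_eq_right h
      have := abs_nonneg (p - q)
      rw [h2]; linarith

section Measure

variable [MeasurableSpace Z] [BorelSpace Z] (ν : Measure Z) [IsFiniteMeasure ν]

lemma integrable_min_STrans (c : ℝ) (hlb : 0 ≤ lam * b ^ 2) {D : ℝ}
    (hD : ∀ x y : Z, dist x y ≤ D) (f : C(Z, ℝ)) :
    Integrable (fun x => min (STrans b lam (⇑f) x) c) ν := by
  have hcont : Continuous fun x => min (STrans b lam (⇑f) x) c :=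
    ((STrans_lipschitz hlb hD f).continuous).min continuous_const
  exact hcont.integrable_of_hasCompactSupport (HasCompactSupport.of_compactSpace _)

lemma continuous_phi (c : ℝ) (hlb : 0 ≤ lam * b ^ 2) {D : ℝ}
    (hD : ∀ x y : Z, dist x y ≤ D) :
    Continuous fun f : C(Z, ℝ) => ∫ x, min (STrans b lam (⇑f) x) c ∂ν := by
  have : LipschitzWith (ν univ).toNNReal
      (fun f : C(Z, ℝ) => ∫ x, min (STrans b lam (⇑f) x) c ∂ν) := by
    refine LipschitzWith.of_dist_le_mul fun f g => ?_
    rw [Real.dist_eq, ← integral_sub (integrable_min_STrans ν c hlb hD f)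
      (integrable_min_STrans ν c hlb hD g)]
    have hb : ∀ x : Z, ‖min (STrans b lam (⇑f) x) c - min (STrans b lam (⇑g) x) c‖
        ≤ dist f g := by
      intro x
      rw [Real.norm_eq_abs]
      exact le_trans abs_min_sub_min_le (STrans_dist_le hlb f g x)
    have := norm_integral_le_of_norm_le_const (μ := ν) (C := dist f g)
      (Filter.Eventually.of_forall hb)
    rw [Real.norm_eq_abs] at this
    calc |∫ x, (min (STrans b lam (⇑f) x) c - min (STrans b lam (⇑g) x) c) ∂ν|
        ≤ dist f g * (ν univ).toReal := this
      _ = ((ν univ).toNNReal : ℝ) * dist f g := by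
          rw [mul_comm]; congr 1
  exact this.continuous

end Measure

/-- Sum of finitely many `L`-Lipschitz continuous maps is `card • L`-Lipschitz. -/
lemma lipschitz_finset_sum {ι : Type*} (s : Finset ι) (F : ι → C(Z, ℝ)) (L : ℝ≥0)
    (h : ∀ j ∈ s, LipschitzWith L ⇑(F j)) :
    LipschitzWith ((s.card : ℝ≥0) * L) ⇑(∑ j ∈ s, F j) := by
  classical
  induction s using Finset.induction_on with
  | empty => simpa using (LipschitzWith.const' (0 : ℝ) (K := 0 * L))
  | @insert a s' hx hs' =>
    have h1 : LipschitzWith L ⇑(F a) := h a (Finset.mem_insert_self _ _)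
    have h2 : LipschitzWith ((s'.card : ℝ≥0) * L) ⇑(∑ j ∈ s', F j) :=
      hs' fun j hj => h j (Finset.mem_insert_of_mem hj)
    rw [Finset.sum_insert hx]
    have := h1.add h2
    have hcard : ((insert a s').card : ℝ≥0) * L = L + (s'.card : ℝ≥0) * L := by
      rw [Finset.card_insert_of_notMem hx]
      push_cast
      ring
    rw [hcard]
    exact this

/-- Arzelà–Ascoli: uniformly Lipschitz, uniformly bounded subsets of `C(Z, ℝ)` are compact. -/
lemma isCompact_lip_ball (L : ℝ≥0) (C : ℝ) :
    IsCompact {f : C(Z, ℝ) | LipschitzWith L ⇑f ∧ ∀ x, |f x| ≤ C} := by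
  set S := {f : C(Z, ℝ) | LipschitzWith L ⇑f ∧ ∀ x, |f x| ≤ C}
  apply ArzelaAscoli.isCompact_of_equicontinuous
  · have himg : ContinuousMap.toFun '' S =
        {h : Z → ℝ | (∀ x y, dist (h x) (h y) ≤ (L : ℝ) * dist x y) ∧ ∀ x, h x ∈ Icc (-C) C} := by
      ext h
      constructor
      · rintro ⟨f, ⟨hf1, hf2⟩, rfl⟩
        refine ⟨fun x y => hf1.dist_le_mul x y, fun x => ?_⟩
        have := abs_le.mp (hf2 x)
        exact ⟨this.1, this.2⟩
      · rintro ⟨h1, h2⟩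
        have hlip : LipschitzWith L h := LipschitzWith.of_dist_le_mul h1
        exact ⟨⟨h, hlip.continuous⟩, ⟨hlip, fun x => abs_le.mpr ⟨(h2 x).1, (h2 x).2⟩⟩, rfl⟩
    rw [himg]
    have hclosed : IsClosed {h : Z → ℝ |
        (∀ x y, dist (h x) (h y) ≤ (L : ℝ) * dist x y) ∧ ∀ x, h x ∈ Icc (-C) C} := by
      have hc1 : IsClosed {h : Z → ℝ | ∀ x y, dist (h x) (h y) ≤ (L : ℝ) * dist x y} := by
        have he : {h : Z → ℝ | ∀ x y, dist (h x) (h y) ≤ (L : ℝ) * dist x y}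
            = ⋂ (x) (y), {h : Z → ℝ | dist (h x) (h y) ≤ (L : ℝ) * dist x y} := by
          ext; simp
        rw [he]
        exact isClosed_iInter fun x => isClosed_iInter fun y =>
          isClosed_le ((continuous_apply x).dist (continuous_apply y)) continuous_const
      have hc2 : IsClosed {h : Z → ℝ | ∀ x, h x ∈ Icc (-C) C} := by
        have he : {h : Z → ℝ | ∀ x, h x ∈ Icc (-C) C}
            = ⋂ x, {h : Z → ℝ | h x ∈ Icc (-C) C} := by ext; simp
        rw [he]
        exact isClosed_iInter fun x => isClosed_Icc.preimage (continuous_apply x)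
      exact hc1.inter hc2
    refine IsCompact.of_isClosed_subset (isCompact_univ_pi fun _ : Z => isCompact_Icc (a := -C) (b := C)) hclosed ?_
    intro h hh
    rw [mem_univ_pi]
    exact fun x => hh.2 x
  · apply Metric.equicontinuous_of_continuity_modulus (fun t => (L : ℝ) * t)
    · have : Continuous fun t : ℝ => (L : ℝ) * t := continuous_const.mul continuous_id
      simpa using this.tendsto 0
    · intro x y f
      exact f.2.1.dist_le_mul x y

end Aux


variable {X : Type*} [MetricSpace X] [MeasurableSpace X]

/-- `S_λ f (x) = inf_{y ∈ K} ( λ b² d(x,y)² - f y )`, for a function `f` on a set `K`. -/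
def Sop (b lam : ℝ) {K : Set X} (f : K → ℝ) (x : K) : ℝ :=
  ⨅ y : K, (lam * b ^ 2 * dist x y ^ 2 - f y)

/-- `S̄_λ f (x) = min { S_λ f (x), λ a }`. -/
def Sbar (a b lam : ℝ) {K : Set X} (f : K → ℝ) (x : K) : ℝ :=
  min (Sop b lam f x) (lam * a)

/-- the dual problem `(B*)` admits a maximizer. -/
theorem dual_problem_has_solution
    {X : Type*} [MetricSpace X] [PolishSpace X] [MeasurableSpace X] [BorelSpace X]
    (a b : ℝ) (ha : 0 < a) (hb : 0 < b)
    (k : ℕ) (hk : 2 ≤ k)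
    (μs : Fin k → Measure X) (hfin : ∀ i, IsFiniteMeasure (μs i))
    (hcpt : ∀ i, IsCompact (msupport (μs i)))
    (l : Fin k → ℝ) (hl : ∀ i, 0 < l i) (hsum : ∑ i, l i = 1)
    (K : Set X) (hK : K = ⋃ i, msupport (μs i)) :
    ∃ f : Fin k → C(K, ℝ),
      (∀ i, ∀ y : K, f i y ≤ l i * a) ∧ (∑ i, f i = 0) ∧
      ∑ i, ∫ y, Sbar a b (l i) (⇑(f i)) y ∂((μs i).comap Subtype.val) =
        sSup {r : ℝ | ∃ g : Fin k → C(K, ℝ),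
          (∀ i, ∀ y : K, g i y ≤ l i * a) ∧ (∑ i, g i = 0) ∧
          r = ∑ i, ∫ y, Sbar a b (l i) (⇑(g i)) y ∂((μs i).comap Subtype.val)} := by
  classical
  have hKcpt : IsCompact K := by
    rw [hK]; exact isCompact_iUnion fun i => hcpt i
  have hKmeas : MeasurableSet K := hKcpt.isClosed.measurableSet
  haveI hKcs : CompactSpace ↥K := isCompact_iff_compactSpace.mp hKcpt
  have hfinn : ∀ i, IsFiniteMeasure ((μs i).comap (Subtype.val : K → X)) := by
    intro i
    haveI := hfin i
    constructor
    rw [comap_subtype_coe_apply hKmeas (μs i) univ]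
    exact lt_of_le_of_lt (measure_mono (subset_univ _)) (measure_lt_top _ _)
  rcases isEmpty_or_nonempty ↥K with hem | hne
  · -- degenerate case : `K` is empty
    have hν0 : ∀ i, ((μs i).comap (Subtype.val : K → X)) = 0 := fun i =>
      Measure.eq_zero_of_isEmpty _
    have hzero : ∀ g : Fin k → C(K, ℝ),
        (∑ i, ∫ y, Sbar a b (l i) (⇑(g i)) y ∂((μs i).comap Subtype.val)) = 0 := by
      intro g
      refine Finset.sum_eq_zero fun i _ => ?_
      rw [hν0 i, integral_zero_measure]
    have hfe : ∀ i (y : ↥K), (0 : C(K, ℝ)) y ≤ l i * a := fun i y => by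
      simp only [ContinuousMap.zero_apply]
      exact (mul_pos (hl i) ha).le
    refine ⟨fun _ => 0, hfe, by simp, ?_⟩
    have hset : {r : ℝ | ∃ g : Fin k → C(K, ℝ),
        (∀ i, ∀ y : K, g i y ≤ l i * a) ∧ (∑ i, g i = 0) ∧
        r = ∑ i, ∫ y, Sbar a b (l i) (⇑(g i)) y ∂((μs i).comap Subtype.val)} = {0} := by
      ext r
      constructor
      · rintro ⟨g, -, -, rfl⟩
        simp [hzero g]
      · rintro rfl
        exact ⟨fun _ => 0, hfe, by simp, (hzero _).symm⟩
    rw [hset, csSup_singleton, hzero]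
  · -- main case : `K` is nonempty
    set D : ℝ := Metric.diam (univ : Set ↥K) with hDdef
    have hD : ∀ x y : ↥K, dist x y ≤ D := fun x y =>
      Metric.dist_le_diam_of_mem isCompact_univ.isBounded (mem_univ x) (mem_univ y)
    have hD0 : 0 ≤ D := Metric.diam_nonneg
    have hlb : ∀ i, 0 ≤ l i * b ^ 2 := fun i => le_of_lt (mul_pos (hl i) (pow_pos hb 2))
    have hl1 : ∀ i, l i ≤ 1 := by
      intro i
      rw [← hsum]
      exact Finset.single_le_sum (fun j _ => (hl j).le) (Finset.mem_univ i)
    set ν : Fin k → Measure ↥K := fun i => (μs i).comap Subtype.val with hνdef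
    set Lb : ℝ≥0 := Real.toNNReal (2 * b ^ 2 * D) with hLbdef
    set Lbig : ℝ≥0 := (k : ℝ≥0) * Lb with hLbigdef
    have hLb_le : Lb ≤ Lbig := by
      refine le_mul_of_one_le_left (zero_le) ?_
      exact_mod_cast Nat.one_le_cast.mpr (by omega : 1 ≤ k)
    have hLweakb : ∀ i (f : C(↥K, ℝ)), LipschitzWith Lb (STrans b (l i) ⇑f) := by
      intro i f
      refine (STrans_lipschitz (hlb i) hD f).weaken (Real.toNNReal_mono ?_)
      nlinarith [(hl i).le, hl1 i, sq_nonneg b, hD0,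
        mul_nonneg (mul_nonneg (sub_nonneg.mpr (hl1 i)) (sq_nonneg b)) hD0]
    have hint : ∀ i (f : C(↥K, ℝ)),
        Integrable (fun x => min (STrans b (l i) (⇑f) x) (l i * a)) (ν i) := by
      intro i f
      haveI := hfinn i
      exact integrable_min_STrans (ν i) (l i * a) (hlb i) hD f
    set J : (Fin k → C(↥K, ℝ)) → ℝ :=
      fun f => ∑ i, ∫ x, min (STrans b (l i) (⇑(f i)) x) (l i * a) ∂(ν i) with hJdef
    have hJeq : ∀ g : Fin k → C(↥K, ℝ),
        (∑ i, ∫ y, Sbar a b (l i) (⇑(g i)) y ∂((μs i).comap Subtype.val)) = J g :=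
      fun g => rfl
    have hJcont : Continuous J := by
      apply continuous_finset_sum
      intro i _
      have h1 : Continuous fun g : C(↥K, ℝ) =>
          ∫ x, min (STrans b (l i) (⇑g) x) (l i * a) ∂(ν i) := by
        haveI := hfinn i
        exact continuous_phi (ν i) (l i * a) (hlb i) hD
      exact h1.comp (continuous_apply i)
    set E : Set C(↥K, ℝ) := {f | LipschitzWith Lbig ⇑f ∧ ∀ x, |f x| ≤ 2 * a} with hEdef
    have hEcpt : IsCompact E := isCompact_lip_ball Lbig (2 * a)
    set 𝒦 : Set (Fin k → C(↥K, ℝ)) :=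
      {f | (∀ i, f i ∈ E) ∧ (∀ i x, f i x ≤ l i * a) ∧ (∑ i, f i = 0)} with h𝒦def
    have h𝒦cpt : IsCompact 𝒦 := by
      have heq : 𝒦 = (univ.pi fun _ : Fin k => E) ∩
          ({f : Fin k → C(↥K, ℝ) | ∀ i x, f i x ≤ l i * a} ∩
            {f : Fin k → C(↥K, ℝ) | ∑ i, f i = 0}) := by
        ext f
        simp only [h𝒦def, mem_setOf_eq, mem_inter_iff, mem_univ_pi]
      rw [heq]
      refine (isCompact_univ_pi fun _ => hEcpt).inter_right (IsClosed.inter ?_ ?_)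
      · have he : {f : Fin k → C(↥K, ℝ) | ∀ i x, f i x ≤ l i * a}
            = ⋂ (i) (x), {f : Fin k → C(↥K, ℝ) | f i x ≤ l i * a} := by ext; simp
        rw [he]
        exact isClosed_iInter fun i => isClosed_iInter fun x =>
          isClosed_le ((continuous_eval_const x).comp (continuous_apply i))
            continuous_const
      · have : {f : Fin k → C(↥K, ℝ) | ∑ i, f i = 0}
            = (fun f : Fin k → C(↥K, ℝ) => ∑ i, f i) ⁻¹' {0} := by ext; simp
        rw [this]
        exact isClosed_singleton.preimage (continuous_finset_sum _ fun i _ => continuous_apply i)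
    have h0𝒦 : (fun _ : Fin k => (0 : C(↥K, ℝ))) ∈ 𝒦 := by
      refine ⟨fun i => ⟨?_, fun x => ?_⟩, fun i x => ?_, by simp⟩
      · exact LipschitzWith.const' 0
      · simp only [ContinuousMap.zero_apply, abs_zero]
        linarith
      · simp only [ContinuousMap.zero_apply]
        exact (mul_pos (hl i) ha).le
    obtain ⟨fstar, hfstar, hmax⟩ := h𝒦cpt.exists_isMaxOn ⟨_, h0𝒦⟩ hJcont.continuousOn
    -- normalization: every feasible tuple can be improved into `𝒦`
    have hnorm : ∀ g : Fin k → C(↥K, ℝ), (∀ i, ∀ y, g i y ≤ l i * a) → (∑ i, g i = 0) →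
        ∃ g' ∈ 𝒦, J g ≤ J g' := by
      intro g hg1 hg2
      set i₀ : Fin k := ⟨0, by omega⟩ with hi₀
      set p : Fin k → C(↥K, ℝ) := fun j =>
        STransCM b (l j) (hlb j) hD (STransCM b (l j) (hlb j) hD (g j)) with hpdef
      set T : C(↥K, ℝ) := ∑ j ∈ Finset.univ.erase i₀, p j with hTdef
      set g' : Fin k → C(↥K, ℝ) := fun j => if j = i₀ then -T else p j with hg'def
      have hsumg : ∀ y, ∑ j, g j y = 0 := by
        intro y
        have h := DFunLike.congr_fun hg2 y
        simpa using h
      have hTy : ∀ y, T y = ∑ j ∈ Finset.univ.erase i₀, p j y := by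
        intro y; simp [hTdef]
      have hq_lb : ∀ j (y : ↥K), -(l j * a) ≤ STrans b (l j) (⇑(g j)) y := by
        intro j y
        refine le_STrans (g j) fun y' => ?_
        have h1 : 0 ≤ l j * b ^ 2 * dist y y' ^ 2 := mul_nonneg (hlb j) (by positivity)
        have h2 := hg1 j y'
        linarith
      have hp_le : ∀ j (y : ↥K), p j y ≤ l j * a := by
        intro j y
        have h1 := STrans_le_neg (hlb j) (STransCM b (l j) (hlb j) hD (g j)) y
        have h2 := hq_lb j y
        simp only [STransCM_apply] at h1
        calc p j y ≤ -(STrans b (l j) (⇑(g j)) y) := h1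
          _ ≤ l j * a := by linarith
      have hgp : ∀ j (y : ↥K), g j y ≤ p j y := fun j y =>
        le_STrans_STrans (hlb j) hD (g j) y
      have hTg : ∀ y, -T y ≤ g i₀ y := by
        intro y
        have h1 : ∑ j ∈ Finset.univ.erase i₀, g j y ≤ ∑ j ∈ Finset.univ.erase i₀, p j y :=
          Finset.sum_le_sum fun j _ => hgp j y
        have h2 : g i₀ y + ∑ j ∈ Finset.univ.erase i₀, g j y = ∑ j, g j y :=
          Finset.add_sum_erase _ (fun j => g j y) (Finset.mem_univ i₀)
        have h3 := hsumg y
        rw [hTy]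
        linarith
      have hsum_le : ∀ (s : Finset (Fin k)) (y : ↥K), (∑ j ∈ s, p j y) ≤ a := by
        intro s y
        calc ∑ j ∈ s, p j y ≤ ∑ j ∈ s, l j * a := Finset.sum_le_sum fun j _ => hp_le j y
          _ ≤ ∑ j, l j * a := Finset.sum_le_sum_of_subset_of_nonneg (Finset.subset_univ s)
              (fun j _ _ => (mul_pos (hl j) ha).le)
          _ = a := by rw [← Finset.sum_mul, hsum, one_mul]
      have hla : ∀ j, l j * a ≤ a := by
        intro j
        nlinarith [hl1 j, ha.le, (hl j).le]
      have hT_lb : ∀ y : ↥K, -a ≤ T y := by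
        intro y
        have h1 := hTg y
        have h2 := hg1 i₀ y
        have h3 := hla i₀
        linarith
      have hT_ub : ∀ y : ↥K, T y ≤ a := by
        intro y
        rw [hTy]
        exact hsum_le _ y
      -- feasibility of `g'`
      have hg'i₀ : g' i₀ = -T := by simp [hg'def]
      have hg'ne : ∀ j, j ≠ i₀ → g' j = p j := by
        intro j hj; simp [hg'def, hj]
      have hg'le : ∀ j (y : ↥K), g' j y ≤ l j * a := by
        intro j y
        by_cases hj : j = i₀
        · subst hj
          rw [hg'i₀]
          exact (hTg y).trans (hg1 i₀ y)
        · rw [hg'ne j hj]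
          exact hp_le j y
      have hg'sum : ∑ j, g' j = 0 := by
        ext y
        have h1 : g' i₀ y + ∑ j ∈ Finset.univ.erase i₀, g' j y = ∑ j, g' j y :=
          Finset.add_sum_erase _ (fun j => g' j y) (Finset.mem_univ i₀)
        have h2 : ∑ j ∈ Finset.univ.erase i₀, g' j y = ∑ j ∈ Finset.univ.erase i₀, p j y := by
          refine Finset.sum_congr rfl fun j hj => ?_
          rw [hg'ne j (Finset.ne_of_mem_erase hj)]
        have h3 : g' i₀ y = -T y := by rw [hg'i₀]; simp
        have h4 : (∑ j, g' j) y = ∑ j, g' j y := by simp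
        have h5 := hTy y
        simp only [ContinuousMap.zero_apply, h4]
        linarith
      -- `g'` lands in `E`
      have hpLip : ∀ j, LipschitzWith Lb ⇑(p j) :=
        fun j => hLweakb j (STransCM b (l j) (hlb j) hD (g j))
      have hTLip : LipschitzWith Lbig ⇑T := by
        have h1 : LipschitzWith (((Finset.univ.erase i₀).card : ℝ≥0) * Lb) ⇑T :=
          lipschitz_finset_sum _ _ _ fun j _ => hpLip j
        refine h1.weaken ?_
        have hcard : ((Finset.univ.erase i₀).card : ℝ≥0) ≤ (k : ℝ≥0) := by
          have h2 : (Finset.univ.erase i₀).card ≤ k := by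
            calc (Finset.univ.erase i₀).card ≤ (Finset.univ : Finset (Fin k)).card :=
              Finset.card_le_card (Finset.erase_subset _ _)
            _ = k := by simp
          exact_mod_cast h2
        exact mul_le_mul_left hcard Lb
      have hg'E : ∀ j, g' j ∈ E := by
        intro j
        by_cases hj : j = i₀
        · subst hj
          rw [hg'i₀]
          refine ⟨?_, fun y => ?_⟩
          · have : (⇑(-T) : ↥K → ℝ) = fun x => -(T x) := rfl
            rw [this]
            exact hTLip.neg
          · have h1 := hT_lb y
            have h2 := hT_ub y
            rw [abs_le]
            constructor <;> simp only [ContinuousMap.neg_apply] <;> linarith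
        · rw [hg'ne j hj]
          refine ⟨(hpLip j).weaken hLb_le, fun y => ?_⟩
          have hup : p j y ≤ a := (hp_le j y).trans (hla j)
          have hjmem : j ∈ Finset.univ.erase i₀ := Finset.mem_erase.mpr ⟨hj, Finset.mem_univ j⟩
          have hsplit : p j y + ∑ j' ∈ (Finset.univ.erase i₀).erase j, p j' y
              = ∑ j' ∈ Finset.univ.erase i₀, p j' y :=
            Finset.add_sum_erase _ (fun j' => p j' y) hjmem
          have h1 := hT_lb y
          have h2 := hsum_le ((Finset.univ.erase i₀).erase j) y
          have h3 := hTy y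
          rw [abs_le]
          constructor <;> linarith
      refine ⟨g', ⟨hg'E, hg'le, hg'sum⟩, ?_⟩
      refine Finset.sum_le_sum fun i _ => ?_
      by_cases hi : i = i₀
      · subst hi
        refine integral_mono (hint i₀ (g i₀)) (hint i₀ (g' i₀)) fun y => ?_
        have hle' : ∀ x, g' i₀ x ≤ g i₀ x := by
          intro x
          rw [hg'i₀]
          exact hTg x
        have hmono : STrans b (l i₀) (⇑(g i₀)) y ≤ STrans b (l i₀) (⇑(g' i₀)) y :=
          STrans_anti (hlb i₀) hle' y
        exact min_le_min hmono (le_refl _)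
      · have hfun : (fun y => min (STrans b (l i) (⇑(g' i)) y) (l i * a))
            = fun y => min (STrans b (l i) (⇑(g i)) y) (l i * a) := by
          funext y
          rw [hg'ne i hi, hpdef]
          rw [STrans_triple (hlb i) hD (g i) y]
        rw [hfun]
    -- conclusion
    refine ⟨fstar, fun i y => hfstar.2.1 i y, hfstar.2.2, ?_⟩
    have hmem : (∑ i, ∫ y, Sbar a b (l i) (⇑(fstar i)) y ∂((μs i).comap Subtype.val)) ∈
        {r : ℝ | ∃ g : Fin k → C(K, ℝ),
          (∀ i, ∀ y : K, g i y ≤ l i * a) ∧ (∑ i, g i = 0) ∧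
          r = ∑ i, ∫ y, Sbar a b (l i) (⇑(g i)) y ∂((μs i).comap Subtype.val)} :=
      ⟨fstar, fun i y => hfstar.2.1 i y, hfstar.2.2, rfl⟩
    have hbdd : BddAbove {r : ℝ | ∃ g : Fin k → C(K, ℝ),
        (∀ i, ∀ y : K, g i y ≤ l i * a) ∧ (∑ i, g i = 0) ∧
        r = ∑ i, ∫ y, Sbar a b (l i) (⇑(g i)) y ∂((μs i).comap Subtype.val)} := by
      refine ⟨∑ i, ((ν i) univ).toReal * (l i * a), ?_⟩
      rintro r ⟨g, hg1, hg2, rfl⟩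
      rw [hJeq g]
      refine Finset.sum_le_sum fun i _ => ?_
      haveI := hfinn i
      calc ∫ x, min (STrans b (l i) (⇑(g i)) x) (l i * a) ∂(ν i)
          ≤ ∫ _, l i * a ∂(ν i) :=
            integral_mono (hint i (g i)) (integrable_const _) fun y => min_le_right _ _
        _ = ((ν i) univ).toReal * (l i * a) := by
            rw [integral_const, smul_eq_mul]
            rfl
    refine le_antisymm (le_csSup hbdd hmem) (csSup_le ⟨_, hmem⟩ ?_)
    rintro r ⟨g, hg1, hg2, rfl⟩
    obtain ⟨g', hg'𝒦, hle⟩ := hnorm g hg1 hg2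
    rw [hJeq g, hJeq fstar]
    exact hle.trans (hmax hg'𝒦)
end
end

section
/- Let (X,d) be a Polish metric space, a,b>0, K a compact subset of X with diameter D, and λ > 0. If f ∈ C_b(K) satisfies f(x) ≤ λa for all x ∈ K, then both S_λ f and (S_λ ∘ S_λ)f are Lipschitz functions on K with Lipschitz constant 2λb²D. -/
open MeasureTheory Set Filter Topology
open scoped ENNReal

noncomputable section

variable {X : Type*} [MetricSpace X]

lemma Sop_bddBelow (b lam : ℝ) (hb : 0 ≤ b) (hlam : 0 ≤ lam) {K : Set X}
    (f : K → ℝ) (M : ℝ) (hf : ∀ y : K, f y ≤ M) (x : K) :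
    BddBelow (Set.range fun y : K => lam * b ^ 2 * dist x y ^ 2 - f y) := by
  refine ⟨-M, ?_⟩
  rintro _ ⟨y, rfl⟩
  dsimp only
  have h1 := hf y
  have h2 : 0 ≤ lam * b ^ 2 * dist x y ^ 2 := by positivity
  linarith

lemma Sop_sub_le (b lam : ℝ) (hb : 0 ≤ b) (hlam : 0 ≤ lam) {K : Set X}
    (hKb : Bornology.IsBounded K)
    (f : K → ℝ) (M : ℝ) (hf : ∀ y : K, f y ≤ M) (x y : K) :
    Sop b lam f x - Sop b lam f y ≤ 2 * lam * b ^ 2 * Metric.diam K * dist x y := by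
  have hbdx := Sop_bddBelow b lam hb hlam f M hf x
  have hbdy := Sop_bddBelow b lam hb hlam f M hf y
  have hne : Nonempty K := ⟨x⟩
  rw [sub_le_iff_le_add, add_comm]
  show Sop b lam f x ≤
      (⨅ z : K, (lam * b ^ 2 * dist y z ^ 2 - f z)) + 2 * lam * b ^ 2 * Metric.diam K * dist x y
  rw [← sub_le_iff_le_add]
  apply le_ciInf
  intro z
  rw [sub_le_iff_le_add]
  have h1 : Sop b lam f x ≤ lam * b ^ 2 * dist x z ^ 2 - f z := ciInf_le hbdx z
  have hdx : dist (x : X) z ≤ Metric.diam K := Metric.dist_le_diam_of_mem hKb x.2 z.2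
  have hdy : dist (y : X) z ≤ Metric.diam K := Metric.dist_le_diam_of_mem hKb y.2 z.2
  have htri : |dist (x : X) z - dist (y : X) z| ≤ dist (x : X) y := abs_dist_sub_le _ _ _
  have htri' : dist (x : X) z - dist (y : X) z ≤ dist (x : X) y := (abs_le.mp htri).2
  have hxz : (0:ℝ) ≤ dist (x : X) z := dist_nonneg
  have hyz : (0:ℝ) ≤ dist (y : X) z := dist_nonneg
  have hxy : (0:ℝ) ≤ dist (x : X) y := dist_nonneg
  have hdistxz : dist x z = dist (x : X) z := Subtype.dist_eq x z
  have hdistyz : dist y z = dist (y : X) z := Subtype.dist_eq y z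
  have hdistxy : dist x y = dist (x : X) y := Subtype.dist_eq x y
  rw [hdistyz, hdistxy]
  rw [hdistxz] at h1
  have key : lam * b ^ 2 * dist (x:X) z ^ 2 - lam * b ^ 2 * dist (y:X) z ^ 2 ≤
      2 * lam * b ^ 2 * Metric.diam K * dist (x:X) y := by
    have hb2 : (0:ℝ) ≤ lam * b ^ 2 := by positivity
    nlinarith [mul_nonneg hb2 hxy, mul_nonneg hb2 (add_nonneg hxz hyz)]
  linarith

lemma Sop_abs_le (b lam : ℝ) (hb : 0 ≤ b) (hlam : 0 ≤ lam) {K : Set X}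
    (hKb : Bornology.IsBounded K)
    (f : K → ℝ) (M : ℝ) (hf : ∀ y : K, f y ≤ M) (x y : K) :
    |Sop b lam f x - Sop b lam f y| ≤ 2 * lam * b ^ 2 * Metric.diam K * dist x y := by
  rw [abs_sub_le_iff]
  constructor
  · exact Sop_sub_le b lam hb hlam hKb f M hf x y
  · rw [dist_comm]
    exact Sop_sub_le b lam hb hlam hKb f M hf y x

/-- for `f ∈ C_b(K)` with `f ≤ λ a` on a compact set `K` of diameter `D`,
both `S_λ f` and `S_λ (S_λ f)` are `2 λ b² D`-Lipschitz on `K`. -/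
theorem Sop_lipschitz
    {X : Type*} [MetricSpace X] [PolishSpace X]
    (a b lam : ℝ) (ha : 0 < a) (hb : 0 < b) (hlam : 0 < lam)
    (K : Set X) (hK : IsCompact K)
    (f : C(K, ℝ)) (hf : ∀ y : K, f y ≤ lam * a) :
    (∀ x y : K, |Sop b lam (⇑f) x - Sop b lam (⇑f) y| ≤
        2 * lam * b ^ 2 * Metric.diam K * dist x y) ∧
    (∀ x y : K, |Sop b lam (Sop b lam (⇑f)) x - Sop b lam (Sop b lam (⇑f)) y| ≤
        2 * lam * b ^ 2 * Metric.diam K * dist x y) := by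
  have hKb := hK.isBounded
  constructor
  · intro x y
    exact Sop_abs_le b lam hb.le hlam.le hKb (⇑f) (lam * a) hf x y
  · intro x y
    -- need an upper bound for `Sop b lam f`
    have : CompactSpace K := isCompact_iff_compactSpace.mp hK
    obtain ⟨M, hM⟩ : ∃ M, ∀ z : K, -f z ≤ M := by
      obtain ⟨M, hM⟩ := (isCompact_range (f.continuous.neg)).bddAbove
      exact ⟨M, fun z => hM ⟨z, rfl⟩⟩
    have hSup : ∀ z : K, Sop b lam (⇑f) z ≤ M := by
      intro z
      have h1 : Sop b lam (⇑f) z ≤ lam * b ^ 2 * dist z z ^ 2 - f z :=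
        ciInf_le (Sop_bddBelow b lam hb.le hlam.le (⇑f) (lam * a) hf z) z
      simp only [dist_self] at h1
      have := hM z
      nlinarith
    exact Sop_abs_le b lam hb.le hlam.le hKb _ M hSup x y
end
end
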